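/- arXiv:2507.02007 — 10 statements merged into one kernel-verified Lean document; each statement's English description precedes it below -/
import Mathlib

section
/- The set B_reg = {A ∈ B : for every nonempty B' ⊆ A, the set Δ_{B'} = {α ∈ L : θ_α(B') ≠ ∅} is finite and nonempty} is an ideal of B. -/
/-- The set B_reg = {A : for every nonempty B' ≤ A, the set
Δ_{B'} = {α ∈ L : θ_α(B') ≠ ∅} is finite and nonempty} is an ideal of B. -/
theorem stmt4 {𝓑 L : Type*} [GeneralizedBooleanAlgebra 𝓑]
    (θ : L → 𝓑 → 𝓑)
    (hbot : ∀ a, θ a ⊥ = ⊥)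
    (hsup : ∀ a (x y : 𝓑), θ a (x ⊔ y) = θ a x ⊔ θ a y)
    (hinf : ∀ a (x y : 𝓑), θ a (x ⊓ y) = θ a x ⊓ θ a y) :
    (∀ A ∈ {A : 𝓑 | ∀ B' : 𝓑, B' ≤ A → B' ≠ ⊥ →
        {α : L | θ α B' ≠ ⊥}.Finite ∧ {α : L | θ α B' ≠ ⊥}.Nonempty},
      ∀ A' ∈ {A : 𝓑 | ∀ B' : 𝓑, B' ≤ A → B' ≠ ⊥ →
        {α : L | θ α B' ≠ ⊥}.Finite ∧ {α : L | θ α B' ≠ ⊥}.Nonempty},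
      A ⊔ A' ∈ {A : 𝓑 | ∀ B' : 𝓑, B' ≤ A → B' ≠ ⊥ →
        {α : L | θ α B' ≠ ⊥}.Finite ∧ {α : L | θ α B' ≠ ⊥}.Nonempty}) ∧
    (∀ A ∈ {A : 𝓑 | ∀ B' : 𝓑, B' ≤ A → B' ≠ ⊥ →
        {α : L | θ α B' ≠ ⊥}.Finite ∧ {α : L | θ α B' ≠ ⊥}.Nonempty},
      ∀ C : 𝓑, C ≤ A →
      C ∈ {A : 𝓑 | ∀ B' : 𝓑, B' ≤ A → B' ≠ ⊥ →
        {α : L | θ α B' ≠ ⊥}.Finite ∧ {α : L | θ α B' ≠ ⊥}.Nonempty}) := by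
  have hmono : ∀ a (x y : 𝓑), x ≤ y → θ a x ≤ θ a y := by
    intro a x y hxy
    have : θ a x ⊓ θ a y = θ a x := by rw [← hinf, inf_eq_left.mpr hxy]
    exact le_of_inf_eq this
  constructor
  · intro A hA A' hA' B' hB' hne
    have hsplit : B' = (B' ⊓ A) ⊔ (B' ⊓ A') := by
      rw [← inf_sup_left, inf_eq_left.mpr hB']
    constructor
    · have hsub : {α : L | θ α B' ≠ ⊥} ⊆
          {α : L | θ α (B' ⊓ A) ≠ ⊥} ∪ {α : L | θ α (B' ⊓ A') ≠ ⊥} := by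
        intro α hα
        by_contra hc
        simp only [Set.mem_union, Set.mem_setOf_eq, not_or, not_not] at hc
        apply hα
        rw [hsplit, hsup, hc.1, hc.2, sup_idem]
      apply Set.Finite.subset _ hsub
      apply Set.Finite.union
      · rcases eq_or_ne (B' ⊓ A) ⊥ with h | h
        · convert Set.finite_empty
          ext α; simp [h, hbot]
        · exact (hA _ inf_le_right h).1
      · rcases eq_or_ne (B' ⊓ A') ⊥ with h | h
        · convert Set.finite_empty
          ext α; simp [h, hbot]
        · exact (hA' _ inf_le_right h).1
    · rcases eq_or_ne (B' ⊓ A) ⊥ with h | h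
      · have h' : B' ⊓ A' ≠ ⊥ := by
          intro h'; apply hne; rw [hsplit, h, h', sup_idem]
        obtain ⟨α, hα⟩ := (hA' _ inf_le_right h').2
        exact ⟨α, fun hc => hα (le_bot_iff.mp (hc ▸ hmono α _ _ inf_le_left))⟩
      · obtain ⟨α, hα⟩ := (hA _ inf_le_right h).2
        exact ⟨α, fun hc => hα (le_bot_iff.mp (hc ▸ hmono α _ _ inf_le_left))⟩
  · intro A hA C hCA B' hB' hne
    exact hA B' (hB'.trans hCA) hne
end

section
/- In the algebra L_R(B, L, θ, I, J), for B ∈ B_reg and A ∈ B, defining q_B = p_B − Σ_{α ∈ Δ_B} s_{α, θ_α(B)} s*_{α, θ_α(B)}, one has p_A q_B = q_B p_A = q_{A ∩ B}. -/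
/-!
By relations (2) and (4), multiplying `s_{α,θ_α(B)} s*_{α,θ_α(B)}` by `p_A` on either side
inserts `p_{θ_α(A)}` between the two factors, which turns it into the summand of `q_{A ∩ B}`.
The indices of `Δ_B` outside `Δ_{A ∩ B}` contribute `s_{α,∅} s*_{α,∅} = 0`.
-/

section Relations

variable {A 𝓑 L : Type*} [Ring A] [SemilatticeInf 𝓑]
  {θ : L → 𝓑 → 𝓑} {𝓘 : L → Set 𝓑} {p : 𝓑 → A} {s t : L → 𝓑 → A}

lemma s_inf_mul_t_inf (R1b : ∀ x y : 𝓑, p (x ⊓ y) = p x * p y)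
    (R4a : ∀ a, ∀ b ∈ 𝓘 a, ∀ x : 𝓑, s a b * p x = s a (b ⊓ x))
    (R4b : ∀ a, ∀ b ∈ 𝓘 a, ∀ x : 𝓑, p x * t a b = t a (b ⊓ x))
    {a : L} {b : 𝓑} (hb : b ∈ 𝓘 a) (x : 𝓑) :
    s a (b ⊓ x) * t a (b ⊓ x) = s a b * p x * t a b := by
  rw [← R4a a b hb, ← R4b a b hb, mul_assoc, ← mul_assoc (p x), ← R1b, inf_idem, mul_assoc]

lemma p_mul_s_mul_t (hθinf : ∀ a (x y : 𝓑), θ a (x ⊓ y) = θ a x ⊓ θ a y)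
    (hθI : ∀ a (x : 𝓑), θ a x ∈ 𝓘 a)
    (R1b : ∀ x y : 𝓑, p (x ⊓ y) = p x * p y)
    (R2a : ∀ a, ∀ b ∈ 𝓘 a, ∀ x : 𝓑, p x * s a b = s a b * p (θ a x))
    (R4a : ∀ a, ∀ b ∈ 𝓘 a, ∀ x : 𝓑, s a b * p x = s a (b ⊓ x))
    (R4b : ∀ a, ∀ b ∈ 𝓘 a, ∀ x : 𝓑, p x * t a b = t a (b ⊓ x)) (a : L) (x y : 𝓑) :
    p x * (s a (θ a y) * t a (θ a y)) = s a (θ a (x ⊓ y)) * t a (θ a (x ⊓ y)) := by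
  rw [hθinf, inf_comm, s_inf_mul_t_inf R1b R4a R4b (hθI a y), ← mul_assoc,
    R2a a _ (hθI a y)]

lemma s_mul_t_mul_p (hθinf : ∀ a (x y : 𝓑), θ a (x ⊓ y) = θ a x ⊓ θ a y)
    (hθI : ∀ a (x : 𝓑), θ a x ∈ 𝓘 a)
    (R1b : ∀ x y : 𝓑, p (x ⊓ y) = p x * p y)
    (R2b : ∀ a, ∀ b ∈ 𝓘 a, ∀ x : 𝓑, t a b * p x = p (θ a x) * t a b)
    (R4a : ∀ a, ∀ b ∈ 𝓘 a, ∀ x : 𝓑, s a b * p x = s a (b ⊓ x))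
    (R4b : ∀ a, ∀ b ∈ 𝓘 a, ∀ x : 𝓑, p x * t a b = t a (b ⊓ x)) (a : L) (x y : 𝓑) :
    s a (θ a y) * t a (θ a y) * p x = s a (θ a (x ⊓ y)) * t a (θ a (x ⊓ y)) := by
  rw [hθinf, inf_comm, s_inf_mul_t_inf R1b R4a R4b (hθI a y), mul_assoc, mul_assoc,
    R2b a _ (hθI a y)]

section OrderBot

variable [OrderBot 𝓑]

lemma s_bot_eq_zero (R1a : p ⊥ = 0)
    (R4a : ∀ a, ∀ b ∈ 𝓘 a, ∀ x : 𝓑, s a b * p x = s a (b ⊓ x))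
    {a : L} (hbot : ⊥ ∈ 𝓘 a) : s a ⊥ = 0 := by
  simpa [R1a] using (R4a a ⊥ hbot ⊥).symm

lemma sum_s_mul_t_of_subset (hθI : ∀ a (x : 𝓑), θ a x ∈ 𝓘 a) (R1a : p ⊥ = 0)
    (R4a : ∀ a, ∀ b ∈ 𝓘 a, ∀ x : 𝓑, s a b * p x = s a (b ⊓ x))
    {x : 𝓑} (hx : {a : L | θ a x ≠ ⊥}.Finite) {Δ : Finset L} (hΔ : hx.toFinset ⊆ Δ) :
    ∑ a ∈ Δ, s a (θ a x) * t a (θ a x) = ∑ a ∈ hx.toFinset, s a (θ a x) * t a (θ a x) := by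
  refine (Finset.sum_subset hΔ fun a _ ha => ?_).symm
  have hθx : θ a x = ⊥ := by simpa using ha
  rw [hθx, s_bot_eq_zero R1a R4a (hθx ▸ hθI a x), zero_mul]

end OrderBot

end Relations

theorem stmt5_general {A 𝓑 L : Type*} [Ring A]
    [GeneralizedBooleanAlgebra 𝓑]
    (θ : L → 𝓑 → 𝓑) (𝓘 : L → Set 𝓑) (Breg : Set 𝓑)
    (hθinf : ∀ a (x y : 𝓑), θ a (x ⊓ y) = θ a x ⊓ θ a y)
    (hθI : ∀ a (x : 𝓑), θ a x ∈ 𝓘 a)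
    (p : 𝓑 → A) (s t : L → 𝓑 → A)
    -- relation (1)
    (R1a : p ⊥ = 0)
    (R1b : ∀ x y : 𝓑, p (x ⊓ y) = p x * p y)
    -- relation (2)
    (R2a : ∀ a, ∀ b ∈ 𝓘 a, ∀ x : 𝓑, p x * s a b = s a b * p (θ a x))
    (R2b : ∀ a, ∀ b ∈ 𝓘 a, ∀ x : 𝓑, t a b * p x = p (θ a x) * t a b)
    -- relation (4)
    (R4a : ∀ a, ∀ b ∈ 𝓘 a, ∀ x : 𝓑, s a b * p x = s a (b ⊓ x))
    (R4b : ∀ a, ∀ b ∈ 𝓘 a, ∀ x : 𝓑, p x * t a b = t a (b ⊓ x))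
    -- B_reg : each Δ is finite, and B_reg is downward closed
    (hregfin : ∀ x ∈ Breg, {a : L | θ a x ≠ ⊥}.Finite)
    (Bv : 𝓑) (hB : Bv ∈ Breg) (Av : 𝓑) (hAB : Av ⊓ Bv ∈ Breg) :
    p Av * (p Bv - ∑ a ∈ (hregfin Bv hB).toFinset, s a (θ a Bv) * t a (θ a Bv)) =
      p (Av ⊓ Bv) - ∑ a ∈ (hregfin (Av ⊓ Bv) hAB).toFinset,
        s a (θ a (Av ⊓ Bv)) * t a (θ a (Av ⊓ Bv)) ∧
    (p Bv - ∑ a ∈ (hregfin Bv hB).toFinset, s a (θ a Bv) * t a (θ a Bv)) * p Av =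
      p (Av ⊓ Bv) - ∑ a ∈ (hregfin (Av ⊓ Bv) hAB).toFinset,
        s a (θ a (Av ⊓ Bv)) * t a (θ a (Av ⊓ Bv)) := by
  have hΔ : (hregfin (Av ⊓ Bv) hAB).toFinset ⊆ (hregfin Bv hB).toFinset :=
    Set.Finite.toFinset_subset_toFinset.mpr fun a ha hBa => ha (by rw [hθinf, hBa, inf_bot_eq])
  have hsum := sum_s_mul_t_of_subset (t := t) hθI R1a R4a (hregfin (Av ⊓ Bv) hAB) hΔ
  constructor
  · rw [mul_sub, ← R1b, Finset.mul_sum, ← hsum]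
    simp only [p_mul_s_mul_t hθinf hθI R1b R2a R4a R4b]
  · rw [sub_mul, ← R1b, inf_comm Bv Av, Finset.sum_mul, ← hsum]
    simp only [s_mul_t_mul_p hθinf hθI R1b R2b R4a R4b]

/-- In the algebra L_R(B,L,θ,I,J) (formalized here as any R-algebra
with elements p, s, s* satisfying the defining relations (1)–(5)), for
B ∈ B_reg and A ∈ B, with q_B = p_B − Σ_{α ∈ Δ_B} s_{α,θ_α(B)} s*_{α,θ_α(B)},
one has p_A q_B = q_B p_A = q_{A ∩ B}. -/
theorem stmt5 {R A 𝓑 L : Type*} [CommRing R] [Ring A] [Algebra R A]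
    [GeneralizedBooleanAlgebra 𝓑] [DecidableEq L]
    (θ : L → 𝓑 → 𝓑) (𝓘 : L → Set 𝓑) (J Breg : Set 𝓑)
    (hθbot : ∀ a, θ a ⊥ = ⊥)
    (hθinf : ∀ a (x y : 𝓑), θ a (x ⊓ y) = θ a x ⊓ θ a y)
    (hθI : ∀ a (x : 𝓑), θ a x ∈ 𝓘 a)
    (p : 𝓑 → A) (s t : L → 𝓑 → A)
    -- relation (1)
    (R1a : p ⊥ = 0)
    (R1b : ∀ x y : 𝓑, p (x ⊓ y) = p x * p y)
    (R1c : ∀ x y : 𝓑, p (x ⊔ y) = p x + p y - p (x ⊓ y))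
    -- relation (2)
    (R2a : ∀ a, ∀ b ∈ 𝓘 a, ∀ x : 𝓑, p x * s a b = s a b * p (θ a x))
    (R2b : ∀ a, ∀ b ∈ 𝓘 a, ∀ x : 𝓑, t a b * p x = p (θ a x) * t a b)
    -- relation (3)
    (R3 : ∀ a a', ∀ b ∈ 𝓘 a, ∀ b' ∈ 𝓘 a',
      t a b * s a' b' = if a = a' then p (b ⊓ b') else 0)
    -- relation (4)
    (R4a : ∀ a, ∀ b ∈ 𝓘 a, ∀ x : 𝓑, s a b * p x = s a (b ⊓ x))
    (R4b : ∀ a, ∀ b ∈ 𝓘 a, ∀ x : 𝓑, p x * t a b = t a (b ⊓ x))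
    -- relation (5), for sets in J (Δ_A is finite there since J ⊆ B_reg)
    (hJfin : ∀ x ∈ J, {a : L | θ a x ≠ ⊥}.Finite)
    (R5 : ∀ x, ∀ hx : x ∈ J,
      p x = ∑ a ∈ (hJfin x hx).toFinset, s a (θ a x) * t a (θ a x))
    -- B_reg : each Δ is finite, and B_reg is downward closed
    (hregfin : ∀ x ∈ Breg, {a : L | θ a x ≠ ⊥}.Finite)
    (hregdown : ∀ x ∈ Breg, ∀ y : 𝓑, y ≤ x → y ∈ Breg)
    (Bv : 𝓑) (hB : Bv ∈ Breg) (Av : 𝓑) (hAB : Av ⊓ Bv ∈ Breg) :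
    p Av * (p Bv - ∑ a ∈ (hregfin Bv hB).toFinset, s a (θ a Bv) * t a (θ a Bv)) =
      p (Av ⊓ Bv) - ∑ a ∈ (hregfin (Av ⊓ Bv) hAB).toFinset,
        s a (θ a (Av ⊓ Bv)) * t a (θ a (Av ⊓ Bv)) ∧
    (p Bv - ∑ a ∈ (hregfin Bv hB).toFinset, s a (θ a Bv) * t a (θ a Bv)) * p Av =
      p (Av ⊓ Bv) - ∑ a ∈ (hregfin (Av ⊓ Bv) hAB).toFinset,
        s a (θ a (Av ⊓ Bv)) * t a (θ a (Av ⊓ Bv)) :=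
  stmt5_general θ 𝓘 Breg hθinf hθI p s t R1a R1b R2a R2b R4a R4b hregfin Bv hB Av hAB
end

section
/- The set S = {(α, A, β) : α, β ∈ L*, ∅ ≠ A ∈ I_α ∩ I_β} ∪ {0} with the stated multiplication and involution (α,A,β)* = (β,A,α) is an inverse semigroup, whose nonzero idempotents are exactly the elements of the form (α, A, α). -/
/-- θ of a word: θ_{α₁…αₙ} = θ_{αₙ} ∘ … ∘ θ_{α₁}. -/
def thetaW {𝓑 L : Type*} (θ : L → 𝓑 → 𝓑) : List L → 𝓑 → 𝓑
  | [], x => x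
  | a :: l, x => thetaW θ l (θ a x)

/-- The ideal I_α associated to a word α: I_ω = B and
I_α = {A : A ≤ θ_{α₂…αₙ}(B') for some B' ∈ I_{α₁}}. -/
def Iw {𝓑 L : Type*} [GeneralizedBooleanAlgebra 𝓑] (θ : L → 𝓑 → 𝓑)
    (𝓘 : L → Set 𝓑) : List L → Set 𝓑
  | [] => Set.univ
  | a :: l => {A | ∃ B' ∈ 𝓘 a, A ≤ thetaW θ l B'}

/-- Triples (α, A, β) together with a zero element. -/
abbrev Tr (L 𝓑 : Type*) := Option (List L × 𝓑 × List L)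

/-- The multiplication of the inverse semigroup of a generalized Boolean
dynamical system. -/
def trMul {𝓑 L : Type*} [GeneralizedBooleanAlgebra 𝓑] [DecidableEq L]
    [DecidableEq 𝓑] (θ : L → 𝓑 → 𝓑) : Tr L 𝓑 → Tr L 𝓑 → Tr L 𝓑
  | none, _ => none
  | _, none => none
  | some (α, A, β), some (γ, C, δ) =>
    if β = γ then
      (if A ⊓ C = ⊥ then none else some (α, A ⊓ C, δ))
    else if β <+: γ then
      (if thetaW θ (γ.drop β.length) A ⊓ C = ⊥ then none
       else some (α ++ γ.drop β.length, thetaW θ (γ.drop β.length) A ⊓ C, δ))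
    else if γ <+: β then
      (if A ⊓ thetaW θ (β.drop γ.length) C = ⊥ then none
       else some (α, A ⊓ thetaW θ (β.drop γ.length) C, δ ++ β.drop γ.length))
    else none

/-- The underlying set of the inverse semigroup S: the zero element together
with all triples (α, A, β) with ∅ ≠ A ∈ I_α ∩ I_β. -/
def trS {𝓑 L : Type*} [GeneralizedBooleanAlgebra 𝓑] (θ : L → 𝓑 → 𝓑)
    (𝓘 : L → Set 𝓑) : Set (Tr L 𝓑) :=
  insert none {x | ∃ α A β, x = some (α, A, β) ∧ A ≠ ⊥ ∧
    A ∈ Iw θ 𝓘 α ∧ A ∈ Iw θ 𝓘 β}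

/-! Each triple `(α, A, β)` acts as a partial bijection of `List L × 𝓑`, sending `(α ++ w, D)`
to `(β ++ w, D)` whenever `⊥ ≠ D ≤ θ_w(A)`. Multiplication of triples is composition of these
partial bijections, `(β, A, α)` acts by the inverse, and a triple with `A ≠ ⊥` is determined by
its action. Associativity and uniqueness of generalised inverses are therefore inherited from
partial bijections, and an idempotent, being its own generalised inverse, equals `(β, A, α)`,
so `α = β`. -/

theorem PEquiv.eq_symm_of_trans_trans_self {α β : Type*} {f : α ≃. β} {g : β ≃. α}
    (hf : (f.trans g).trans f = f) (hg : (g.trans f).trans g = g) : g = f.symm := by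
  refine PEquiv.ext fun b => Option.ext fun a => ?_
  rw [PEquiv.eq_some_iff]
  constructor
  · intro hba
    obtain ⟨c, hc, hca⟩ := (trans_eq_some _ _ _ _).1 (hg.symm ▸ hba)
    obtain ⟨d, hbd, hdc⟩ := (trans_eq_some _ _ _ _).1 hc
    obtain rfl : d = a := Option.some.inj (hbd.symm.trans hba)
    rwa [g.inj hca hba] at hdc
  · intro hab
    obtain ⟨c, hc, hcb⟩ := (trans_eq_some _ _ _ _).1 (hf.symm ▸ hab)
    obtain ⟨d, had, hdc⟩ := (trans_eq_some _ _ _ _).1 hc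
    obtain rfl : d = b := Option.some.inj (had.symm.trans hab)
    rwa [f.inj hcb hab] at hdc

theorem thetaW_append {𝓑 L : Type*} (θ : L → 𝓑 → 𝓑) :
    ∀ (l₁ l₂ : List L) (x : 𝓑), thetaW θ (l₁ ++ l₂) x = thetaW θ l₂ (thetaW θ l₁ x)
  | [], _, _ => rfl
  | a :: l₁, l₂, x => thetaW_append θ l₁ l₂ (θ a x)

def trStar {𝓑 L : Type*} : Tr L 𝓑 → Tr L 𝓑 := Option.map fun t => (t.2.2, t.2.1, t.1)

theorem trStar_trStar {𝓑 L : Type*} (x : Tr L 𝓑) : trStar (trStar x) = x := by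
  rcases x with _ | ⟨α, A, β⟩ <;> rfl

section GeneralizedBooleanAlgebra

variable {𝓑 L : Type*} [GeneralizedBooleanAlgebra 𝓑] (θ : L → 𝓑 → 𝓑)

theorem thetaW_bot (hθbot : ∀ a, θ a ⊥ = ⊥) : ∀ l : List L, thetaW θ l ⊥ = ⊥
  | [] => rfl
  | a :: l => by rw [thetaW, hθbot, thetaW_bot hθbot l]

theorem thetaW_inf (hθinf : ∀ a (x y : 𝓑), θ a (x ⊓ y) = θ a x ⊓ θ a y) :
    ∀ (l : List L) (x y : 𝓑), thetaW θ l (x ⊓ y) = thetaW θ l x ⊓ thetaW θ l y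
  | [], _, _ => rfl
  | a :: l, x, y => by rw [thetaW, hθinf, thetaW_inf hθinf l]; rfl

theorem thetaW_mono (hθinf : ∀ a (x y : 𝓑), θ a (x ⊓ y) = θ a x ⊓ θ a y) (l : List L) :
    Monotone (thetaW θ l) := fun x y h => by
  rw [← inf_eq_left, ← thetaW_inf θ hθinf, inf_eq_left.2 h]

theorem mem_Iw_of_le {𝓘 : L → Set 𝓑} {α : List L} {A B : 𝓑} (hA : A ∈ Iw θ 𝓘 α)
    (h : B ≤ A) : B ∈ Iw θ 𝓘 α := by
  cases α with
  | nil => trivial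
  | cons a l =>
    obtain ⟨B', hB', hle⟩ := hA
    exact ⟨B', hB', h.trans hle⟩

theorem thetaW_mem_Iw_append (hθinf : ∀ a (x y : 𝓑), θ a (x ⊓ y) = θ a x ⊓ θ a y)
    {𝓘 : L → Set 𝓑} (h𝓘F : ∀ a (x : 𝓑), θ a x ∈ 𝓘 a) {α : List L} {A : 𝓑}
    (hA : A ∈ Iw θ 𝓘 α) (γ : List L) : thetaW θ γ A ∈ Iw θ 𝓘 (α ++ γ) := by
  cases α with
  | nil =>
    cases γ with
    | nil => trivial
    | cons a l => exact ⟨θ a A, h𝓘F a A, le_rfl⟩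
  | cons a l =>
    obtain ⟨B', hB', hle⟩ := hA
    refine ⟨B', hB', ?_⟩
    change thetaW θ γ A ≤ thetaW θ (l ++ γ) B'
    rw [thetaW_append]
    exact thetaW_mono θ hθinf γ hle

theorem mem_trS_some_iff {𝓘 : L → Set 𝓑} {α β : List L} {A : 𝓑} :
    some (α, A, β) ∈ trS θ 𝓘 ↔ A ≠ ⊥ ∧ A ∈ Iw θ 𝓘 α ∧ A ∈ Iw θ 𝓘 β := by
  simp [trS]

theorem ne_bot_of_mem_trS {𝓘 : L → Set 𝓑} {x : Tr L 𝓑} (hx : x ∈ trS θ 𝓘) :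
    ∀ t ∈ x, t.2.1 ≠ ⊥ := by
  rintro ⟨α, A, β⟩ rfl
  exact ((mem_trS_some_iff θ).1 hx).1

theorem ite_mem_trS [DecidableEq 𝓑] {𝓘 : L → Set 𝓑} {α β : List L} {A : 𝓑} (hα : A ∈ Iw θ 𝓘 α)
    (hβ : A ∈ Iw θ 𝓘 β) : (if A = ⊥ then none else some (α, A, β)) ∈ trS θ 𝓘 := by
  split_ifs with hA
  · exact Set.mem_insert _ _
  · exact (mem_trS_some_iff θ).2 ⟨hA, hα, hβ⟩

theorem trStar_ne_bot {x : Tr L 𝓑} (hx : ∀ t ∈ x, t.2.1 ≠ ⊥) : ∀ t ∈ trStar x, t.2.1 ≠ ⊥ := by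
  rcases x with _ | ⟨α, A, β⟩
  · nofun
  · rintro _ ⟨⟩
    exact hx (α, A, β) rfl

theorem trStar_mem_trS {𝓘 : L → Set 𝓑} {x : Tr L 𝓑} (hx : x ∈ trS θ 𝓘) :
    trStar x ∈ trS θ 𝓘 := by
  rcases x with _ | ⟨α, A, β⟩
  · exact Set.mem_insert _ _
  · obtain ⟨hA, hα, hβ⟩ := (mem_trS_some_iff θ).1 hx
    exact (mem_trS_some_iff θ).2 ⟨hA, hβ, hα⟩

open Classical in
noncomputable def tripleFun (α : List L) (A : 𝓑) (β : List L) (p : List L × 𝓑) :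
    Option (List L × 𝓑) :=
  if α <+: p.1 ∧ p.2 ≠ ⊥ ∧ p.2 ≤ thetaW θ (p.1.drop α.length) A then
    some (β ++ p.1.drop α.length, p.2)
  else none

theorem tripleFun_eq_some_iff {α β μ ν : List L} {A D E : 𝓑} :
    tripleFun θ α A β (μ, D) = some (ν, E) ↔
      ∃ w, μ = α ++ w ∧ ν = β ++ w ∧ E = D ∧ D ≠ ⊥ ∧ D ≤ thetaW θ w A := by
  unfold tripleFun
  split_ifs with h
  · obtain ⟨⟨w, rfl⟩, hD, hle⟩ := h
    simp only [List.drop_left] at hle ⊢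
    simp only [Option.some.injEq, Prod.mk.injEq]
    constructor
    · rintro ⟨rfl, rfl⟩
      exact ⟨w, rfl, rfl, rfl, hD, hle⟩
    · rintro ⟨w', hw, rfl, rfl, -⟩
      obtain rfl := List.append_cancel_left hw
      exact ⟨rfl, rfl⟩
  · simp only [false_iff, not_exists, not_and]
    rintro w rfl - - hD hle
    exact h ⟨List.prefix_append α w, hD, by rwa [List.drop_left]⟩

noncomputable def trPEquiv : Tr L 𝓑 → (List L × 𝓑) ≃. (List L × 𝓑)
  | none => ⊥
  | some (α, A, β) =>
    { toFun := tripleFun θ α A β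
      invFun := tripleFun θ β A α
      inv := by
        rintro ⟨μ, D⟩ ⟨ν, E⟩
        simp only [tripleFun_eq_some_iff]
        constructor <;> rintro ⟨w, h₁, h₂, rfl, hD, hle⟩ <;> exact ⟨w, h₂, h₁, rfl, hD, hle⟩ }

@[simp]
theorem trPEquiv_none : trPEquiv θ (none : Tr L 𝓑) = ⊥ := rfl

theorem trPEquiv_some_eq_some_iff {α β μ ν : List L} {A D E : 𝓑} :
    trPEquiv θ (some (α, A, β)) (μ, D) = some (ν, E) ↔
      ∃ w, μ = α ++ w ∧ ν = β ++ w ∧ E = D ∧ D ≠ ⊥ ∧ D ≤ thetaW θ w A :=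
  tripleFun_eq_some_iff θ

theorem trPEquiv_trStar (x : Tr L 𝓑) : trPEquiv θ (trStar x) = (trPEquiv θ x).symm := by
  rcases x with _ | ⟨α, A, β⟩
  · exact PEquiv.symm_bot.symm
  · rfl

theorem trPEquiv_some_self {α β : List L} {A : 𝓑} (hA : A ≠ ⊥) :
    trPEquiv θ (some (α, A, β)) (α, A) = some (β, A) :=
  (trPEquiv_some_eq_some_iff θ).2 ⟨[], by simp, by simp, rfl, hA, le_rfl⟩

theorem exists_append_of_trPEquiv_eq {α β α' β' : List L} {A A' : 𝓑} (hA : A ≠ ⊥)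
    (h : trPEquiv θ (some (α, A, β)) = trPEquiv θ (some (α', A', β'))) :
    ∃ w, α = α' ++ w ∧ β = β' ++ w ∧ A ≤ thetaW θ w A' := by
  obtain ⟨w, hα, hβ, -, -, hle⟩ := (trPEquiv_some_eq_some_iff θ).1 (h ▸ trPEquiv_some_self θ hA)
  exact ⟨w, hα, hβ, hle⟩

theorem eq_of_trPEquiv_eq {x y : Tr L 𝓑} (hx : ∀ t ∈ x, t.2.1 ≠ ⊥) (hy : ∀ t ∈ y, t.2.1 ≠ ⊥)
    (h : trPEquiv θ x = trPEquiv θ y) : x = y := by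
  rcases x with _ | ⟨α, A, β⟩ <;> rcases y with _ | ⟨α', A', β'⟩
  · rfl
  · have := congrArg (· (α', A')) h
    simp [trPEquiv_some_self θ (hy _ rfl)] at this
  · have := congrArg (· (α, A)) h
    simp [trPEquiv_some_self θ (hx _ rfl)] at this
  · obtain ⟨w, rfl, rfl, hle⟩ := exists_append_of_trPEquiv_eq θ (hx _ rfl) h
    obtain ⟨w', hα, -, hle'⟩ := exists_append_of_trPEquiv_eq θ (hy _ rfl) h.symm
    obtain ⟨rfl, rfl⟩ : w = [] ∧ w' = [] := by simpa using hα
    simp only [thetaW, List.append_nil] at hle hle' ⊢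
    rw [le_antisymm hle hle']

theorem trPEquiv_ite [DecidableEq 𝓑] (hθbot : ∀ a, θ a ⊥ = ⊥) (α : List L) (M : 𝓑) (β : List L) :
    trPEquiv θ (if M = ⊥ then none else some (α, M, β)) = trPEquiv θ (some (α, M, β)) := by
  split_ifs with hM
  · subst hM
    refine PEquiv.ext fun ⟨μ, D⟩ => (Option.eq_none_iff_forall_ne_some.2 ?_).symm
    rintro ⟨ν, E⟩ h
    obtain ⟨w, -, -, -, hD, hle⟩ := (trPEquiv_some_eq_some_iff θ).1 h
    exact hD (le_bot_iff.1 (thetaW_bot θ hθbot w ▸ hle))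
  · rfl

section Multiplication

variable [DecidableEq L] [DecidableEq 𝓑]

theorem trMul_some_append_left (α : List L) (A : 𝓑) (β u : List L) (C : 𝓑) (δ : List L) :
    trMul θ (some (α, A, β)) (some (β ++ u, C, δ)) =
      if thetaW θ u A ⊓ C = ⊥ then none else some (α ++ u, thetaW θ u A ⊓ C, δ) := by
  by_cases hu : u = []
  · subst hu
    simp [trMul, thetaW]
  · simp [trMul, hu]

theorem trMul_some_append_right (α : List L) (A : 𝓑) (γ v : List L) (C : 𝓑) (δ : List L) :
    trMul θ (some (α, A, γ ++ v)) (some (γ, C, δ)) =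
      if A ⊓ thetaW θ v C = ⊥ then none else some (α, A ⊓ thetaW θ v C, δ ++ v) := by
  by_cases hv : v = []
  · subst hv
    simp [trMul, thetaW]
  · have : ¬ γ ++ v <+: γ := fun h => hv (by simpa using h.length_le)
    simp [trMul, hv, this]

theorem trMul_some_same_mid (α : List L) (A : 𝓑) (β : List L) (C : 𝓑) (δ : List L) :
    trMul θ (some (α, A, β)) (some (β, C, δ)) =
      if A ⊓ C = ⊥ then none else some (α, A ⊓ C, δ) := by
  simpa [thetaW] using trMul_some_append_left θ α A β [] C δ

theorem trMul_some_of_not_prefix {α β γ δ : List L} {A C : 𝓑} (h₁ : ¬ β <+: γ)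
    (h₂ : ¬ γ <+: β) : trMul θ (some (α, A, β)) (some (γ, C, δ)) = none := by
  have : β ≠ γ := fun h => h₁ (h ▸ List.prefix_rfl)
  simp [trMul, this, h₁, h₂]

theorem trMul_ne_bot (x y : Tr L 𝓑) : ∀ t ∈ trMul θ x y, t.2.1 ≠ ⊥ := by
  rcases x with _ | ⟨α, A, β⟩ <;> rcases y with _ | ⟨γ, C, δ⟩ <;> simp only [trMul] <;>
    (try split_ifs) <;> rintro _ ⟨⟩ <;> assumption

theorem trMul_mem {𝓘 : L → Set 𝓑} (hθinf : ∀ a (x y : 𝓑), θ a (x ⊓ y) = θ a x ⊓ θ a y)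
    (h𝓘F : ∀ a (x : 𝓑), θ a x ∈ 𝓘 a) {x y : Tr L 𝓑} (hx : x ∈ trS θ 𝓘) (hy : y ∈ trS θ 𝓘) :
    trMul θ x y ∈ trS θ 𝓘 := by
  rcases x with _ | ⟨α, A, β⟩
  · exact Set.mem_insert _ _
  rcases y with _ | ⟨γ, C, δ⟩
  · exact Set.mem_insert _ _
  obtain ⟨-, hAα, -⟩ := (mem_trS_some_iff θ).1 hx
  obtain ⟨-, -, hCδ⟩ := (mem_trS_some_iff θ).1 hy
  by_cases hβγ : β <+: γ
  · obtain ⟨u, rfl⟩ := hβγ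
    rw [trMul_some_append_left]
    exact ite_mem_trS θ (mem_Iw_of_le θ (thetaW_mem_Iw_append θ hθinf h𝓘F hAα u) inf_le_left)
      (mem_Iw_of_le θ hCδ inf_le_right)
  by_cases hγβ : γ <+: β
  · obtain ⟨v, rfl⟩ := hγβ
    rw [trMul_some_append_right]
    exact ite_mem_trS θ (mem_Iw_of_le θ hAα inf_le_left)
      (mem_Iw_of_le θ (thetaW_mem_Iw_append θ hθinf h𝓘F hCδ v) inf_le_right)
  rw [trMul_some_of_not_prefix θ hβγ hγβ]
  exact Set.mem_insert _ _

theorem trMul_trMul_trStar_self {x : Tr L 𝓑} (hx : ∀ t ∈ x, t.2.1 ≠ ⊥) :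
    trMul θ (trMul θ x (trStar x)) x = x := by
  rcases x with _ | ⟨α, A, β⟩
  · rfl
  · change trMul θ (trMul θ (some (α, A, β)) (some (β, A, α))) (some (α, A, β)) = _
    rw [trMul_some_same_mid, inf_idem, if_neg (hx _ rfl), trMul_some_same_mid, inf_idem,
      if_neg (hx _ rfl)]

variable (hθbot : ∀ a, θ a ⊥ = ⊥) (hθinf : ∀ a (x y : 𝓑), θ a (x ⊓ y) = θ a x ⊓ θ a y)
include hθbot hθinf

theorem trPEquiv_trMul_append_left (α : List L) (A : 𝓑) (β u : List L) (C : 𝓑) (δ : List L) :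
    trPEquiv θ (trMul θ (some (α, A, β)) (some (β ++ u, C, δ))) =
      (trPEquiv θ (some (α, A, β))).trans (trPEquiv θ (some (β ++ u, C, δ))) := by
  rw [trMul_some_append_left, trPEquiv_ite θ hθbot]
  refine PEquiv.ext fun ⟨μ, D⟩ => Option.ext fun ⟨ν, E⟩ => ?_
  simp only [PEquiv.trans_eq_some, Prod.exists, trPEquiv_some_eq_some_iff, thetaW_inf θ hθinf,
    ← thetaW_append, le_inf_iff]
  constructor
  · rintro ⟨w, rfl, rfl, rfl, hD, hA, hC⟩
    exact ⟨_, _, ⟨u ++ w, by simp, rfl, rfl, hD, hA⟩, ⟨w, by simp, rfl, rfl, hD, hC⟩⟩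
  · rintro ⟨_, _, ⟨w, rfl, rfl, rfl, hD, hA⟩, ⟨w', hw, rfl, rfl, -, hC⟩⟩
    obtain rfl : w = u ++ w' := by simpa using hw
    exact ⟨w', by simp, rfl, rfl, hD, hA, hC⟩

theorem trPEquiv_trMul_append_right (α : List L) (A : 𝓑) (γ v : List L) (C : 𝓑) (δ : List L) :
    trPEquiv θ (trMul θ (some (α, A, γ ++ v)) (some (γ, C, δ))) =
      (trPEquiv θ (some (α, A, γ ++ v))).trans (trPEquiv θ (some (γ, C, δ))) := by
  rw [trMul_some_append_right, trPEquiv_ite θ hθbot]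
  refine PEquiv.ext fun ⟨μ, D⟩ => Option.ext fun ⟨ν, E⟩ => ?_
  simp only [PEquiv.trans_eq_some, Prod.exists, trPEquiv_some_eq_some_iff, thetaW_inf θ hθinf,
    ← thetaW_append, le_inf_iff]
  constructor
  · rintro ⟨w, rfl, rfl, rfl, hD, hA, hC⟩
    exact ⟨_, _, ⟨w, rfl, rfl, rfl, hD, hA⟩, ⟨v ++ w, by simp, by simp, rfl, hD, hC⟩⟩
  · rintro ⟨_, _, ⟨w, rfl, rfl, rfl, hD, hA⟩, ⟨w', hw, rfl, rfl, -, hC⟩⟩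
    obtain rfl : w' = v ++ w := by simpa using hw.symm
    exact ⟨w, rfl, by simp, rfl, hD, hA, hC⟩

theorem trPEquiv_trMul (x y : Tr L 𝓑) :
    trPEquiv θ (trMul θ x y) = (trPEquiv θ x).trans (trPEquiv θ y) := by
  rcases x with _ | ⟨α, A, β⟩
  · exact (PEquiv.bot_trans _).symm
  rcases y with _ | ⟨γ, C, δ⟩
  · exact (PEquiv.trans_bot _).symm
  by_cases hβγ : β <+: γ
  · obtain ⟨u, rfl⟩ := hβγ
    exact trPEquiv_trMul_append_left θ hθbot hθinf α A β u C δ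
  by_cases hγβ : γ <+: β
  · obtain ⟨v, rfl⟩ := hγβ
    exact trPEquiv_trMul_append_right θ hθbot hθinf α A γ v C δ
  rw [trMul_some_of_not_prefix θ hβγ hγβ]
  refine PEquiv.ext fun p => (Option.eq_none_iff_forall_ne_some.2 ?_).symm
  rintro q h
  obtain ⟨⟨ν, E⟩, h₁, h₂⟩ := (PEquiv.trans_eq_some _ _ _ _).1 h
  obtain ⟨w, -, rfl, -⟩ := (trPEquiv_some_eq_some_iff θ).1 h₁
  obtain ⟨w', hw, -⟩ := (trPEquiv_some_eq_some_iff θ).1 h₂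
  rcases List.prefix_or_prefix_of_prefix (List.prefix_append β w)
    (hw ▸ List.prefix_append γ w') with h | h
  · exact hβγ h
  · exact hγβ h

theorem trMul_assoc (x y z : Tr L 𝓑) :
    trMul θ (trMul θ x y) z = trMul θ x (trMul θ y z) :=
  eq_of_trPEquiv_eq θ (trMul_ne_bot θ _ _) (trMul_ne_bot θ _ _) <| by
    simp only [trPEquiv_trMul θ hθbot hθinf, PEquiv.trans_assoc]

theorem eq_trStar_of_trMul_trMul {x y : Tr L 𝓑} (hx : ∀ t ∈ x, t.2.1 ≠ ⊥)
    (hy : ∀ t ∈ y, t.2.1 ≠ ⊥) (hxyx : trMul θ (trMul θ x y) x = x)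
    (hyxy : trMul θ (trMul θ y x) y = y) : y = trStar x := by
  refine eq_of_trPEquiv_eq θ hy (trStar_ne_bot hx) ?_
  rw [trPEquiv_trStar]
  apply PEquiv.eq_symm_of_trans_trans_self
  · simpa only [trPEquiv_trMul θ hθbot hθinf] using congrArg (trPEquiv θ) hxyx
  · simpa only [trPEquiv_trMul θ hθbot hθinf] using congrArg (trPEquiv θ) hyxy

theorem trMul_self_eq_self_iff {α β : List L} {A : 𝓑} (hA : A ≠ ⊥) :
    trMul θ (some (α, A, β)) (some (α, A, β)) = some (α, A, β) ↔ α = β := by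
  constructor
  · intro h
    have hx : ∀ t ∈ some (α, A, β), t.2.1 ≠ ⊥ := by
      rintro _ ⟨⟩
      exact hA
    have := eq_trStar_of_trMul_trMul θ hθbot hθinf hx hx (by rw [h, h]) (by rw [h, h])
    simp only [trStar, Option.map_some, Option.some.injEq, Prod.mk.injEq] at this
    exact this.1
  · rintro rfl
    rw [trMul_some_same_mid, inf_idem, if_neg hA]

end Multiplication

end GeneralizedBooleanAlgebra

theorem stmt7_general {𝓑 L : Type*} [GeneralizedBooleanAlgebra 𝓑] [DecidableEq L]
    [DecidableEq 𝓑] (θ : L → 𝓑 → 𝓑) (𝓘 : L → Set 𝓑)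
    (hθbot : ∀ a, θ a ⊥ = ⊥)
    (hθinf : ∀ a (x y : 𝓑), θ a (x ⊓ y) = θ a x ⊓ θ a y)
    (h𝓘F : ∀ a (x : 𝓑), θ a x ∈ 𝓘 a) :
    -- S is closed under the multiplication
    (∀ x ∈ trS θ 𝓘, ∀ y ∈ trS θ 𝓘, trMul θ x y ∈ trS θ 𝓘) ∧
    -- the multiplication is associative on S
    (∀ x ∈ trS θ 𝓘, ∀ y ∈ trS θ 𝓘, ∀ z ∈ trS θ 𝓘,
      trMul θ (trMul θ x y) z = trMul θ x (trMul θ y z)) ∧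
    -- every element of S has a unique generalized inverse in S
    (∀ x ∈ trS θ 𝓘, ∃! y, y ∈ trS θ 𝓘 ∧
      trMul θ (trMul θ x y) x = x ∧ trMul θ (trMul θ y x) y = y) ∧
    -- the involution (α,A,β)* = (β,A,α) gives the generalized inverse
    (∀ α A β, some (α, A, β) ∈ trS θ 𝓘 →
      trMul θ (trMul θ (some (α, A, β)) (some (β, A, α))) (some (α, A, β)) =
          some (α, A, β) ∧
      trMul θ (trMul θ (some (β, A, α)) (some (α, A, β))) (some (β, A, α)) =
          some (β, A, α)) ∧
    -- the nonzero idempotents are exactly the elements of the form (α, A, α)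
    (∀ x ∈ trS θ 𝓘, x ≠ none →
      (trMul θ x x = x ↔ ∃ α A, x = some (α, A, α))) := by
  refine ⟨fun x hx y hy => trMul_mem θ hθinf h𝓘F hx hy,
    fun x _ y _ z _ => trMul_assoc θ hθbot hθinf x y z, fun x hx => ?_, fun α A β h => ?_,
    fun x hx hne => ?_⟩
  · have hx' := ne_bot_of_mem_trS θ hx
    refine ⟨trStar x, ⟨trStar_mem_trS θ hx, trMul_trMul_trStar_self θ hx', ?_⟩,
      fun y ⟨hy, hxyx, hyxy⟩ =>
        eq_trStar_of_trMul_trMul θ hθbot hθinf hx' (ne_bot_of_mem_trS θ hy) hxyx hyxy⟩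
    simpa only [trStar_trStar] using trMul_trMul_trStar_self θ (trStar_ne_bot hx')
  · have hx := ne_bot_of_mem_trS θ h
    exact ⟨trMul_trMul_trStar_self θ hx, trMul_trMul_trStar_self θ (trStar_ne_bot hx)⟩
  · obtain ⟨⟨α, A, β⟩, rfl⟩ := Option.ne_none_iff_exists'.1 hne
    rw [trMul_self_eq_self_iff θ hθbot hθinf ((mem_trS_some_iff θ).1 hx).1]
    constructor
    · rintro rfl
      exact ⟨α, A, rfl⟩
    · rintro ⟨α', A', h⟩
      simp only [Option.some.injEq, Prod.mk.injEq] at h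
      exact h.1.trans h.2.2.symm

/-- The set S = {(α,A,β) : α,β ∈ L*, ∅ ≠ A ∈ I_α ∩ I_β} ∪ {0} with
the stated multiplication is an inverse semigroup (closed under multiplication,
associative, and every element has a unique generalized inverse — for (α,A,β)
given by (β,A,α)), whose nonzero idempotents are exactly the elements of the
form (α,A,α). -/
theorem stmt7 {𝓑 L : Type*} [GeneralizedBooleanAlgebra 𝓑] [DecidableEq L]
    [DecidableEq 𝓑] (θ : L → 𝓑 → 𝓑) (𝓘 : L → Set 𝓑)
    (hθbot : ∀ a, θ a ⊥ = ⊥)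
    (hθsup : ∀ a (x y : 𝓑), θ a (x ⊔ y) = θ a x ⊔ θ a y)
    (hθinf : ∀ a (x y : 𝓑), θ a (x ⊓ y) = θ a x ⊓ θ a y)
    (h𝓘sup : ∀ a, ∀ x ∈ 𝓘 a, ∀ y ∈ 𝓘 a, x ⊔ y ∈ 𝓘 a)
    (h𝓘down : ∀ a, ∀ x ∈ 𝓘 a, ∀ y : 𝓑, y ≤ x → y ∈ 𝓘 a)
    (h𝓘F : ∀ a (x : 𝓑), θ a x ∈ 𝓘 a) :
    -- S is closed under the multiplication
    (∀ x ∈ trS θ 𝓘, ∀ y ∈ trS θ 𝓘, trMul θ x y ∈ trS θ 𝓘) ∧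
    -- the multiplication is associative on S
    (∀ x ∈ trS θ 𝓘, ∀ y ∈ trS θ 𝓘, ∀ z ∈ trS θ 𝓘,
      trMul θ (trMul θ x y) z = trMul θ x (trMul θ y z)) ∧
    -- every element of S has a unique generalized inverse in S
    (∀ x ∈ trS θ 𝓘, ∃! y, y ∈ trS θ 𝓘 ∧
      trMul θ (trMul θ x y) x = x ∧ trMul θ (trMul θ y x) y = y) ∧
    -- the involution (α,A,β)* = (β,A,α) gives the generalized inverse
    (∀ α A β, some (α, A, β) ∈ trS θ 𝓘 →
      trMul θ (trMul θ (some (α, A, β)) (some (β, A, α))) (some (α, A, β)) =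
          some (α, A, β) ∧
      trMul θ (trMul θ (some (β, A, α)) (some (α, A, β))) (some (β, A, α)) =
          some (β, A, α)) ∧
    -- the nonzero idempotents are exactly the elements of the form (α, A, α)
    (∀ x ∈ trS θ 𝓘, x ≠ none →
      (trMul θ x x = x ↔ ∃ α A, x = some (α, A, α))) :=
  stmt7_general θ 𝓘 hθbot hθinf h𝓘F
end

section
/- The map φ : S^× → F[L] sending (α, A, β) to αβ⁻¹ (viewing words as elements of the free group on L) is a grading on the inverse semigroup S, i.e., φ(st) = φ(s)φ(t) whenever st ≠ 0; consequently S is strongly E*-unitary. -/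
/-- The grading of a triple: (α, A, β) ↦ αβ⁻¹ in the free group on L. -/
def trGrade {𝓑 L : Type*} (x : List L × 𝓑 × List L) : FreeGroup L :=
  (x.1.map FreeGroup.of).prod * ((x.2.2.map FreeGroup.of).prod)⁻¹

private lemma prodOf_eq_mk {L : Type*} (l : List L) :
    (l.map FreeGroup.of).prod = FreeGroup.mk (l.map (fun a => (a, true))) := by
  induction l with
  | nil => rfl
  | cons a t ih =>
      simp only [List.map_cons, List.prod_cons, ih, FreeGroup.of]
      rw [FreeGroup.mul_mk]
      rfl

private lemma reduce_pos {L : Type*} [DecidableEq L] (l : List L) :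
    FreeGroup.reduce (l.map (fun a => (a, true))) = l.map (fun a => (a, true)) := by
  induction l with
  | nil => rfl
  | cons a t ih =>
      rw [List.map_cons, FreeGroup.reduce.cons, ih]
      cases t with
      | nil => rfl
      | cons b s => simp

private lemma prodOf_injective {L : Type*} [DecidableEq L] {l₁ l₂ : List L}
    (h : (l₁.map FreeGroup.of).prod = (l₂.map FreeGroup.of).prod) : l₁ = l₂ := by
  rw [prodOf_eq_mk, prodOf_eq_mk] at h
  have h2 := congrArg FreeGroup.toWord h
  rw [FreeGroup.toWord_mk, FreeGroup.toWord_mk, reduce_pos, reduce_pos] at h2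
  exact List.map_injective_iff.2 (fun a b hab => congrArg Prod.fst hab) h2

private lemma prodOf_append {L : Type*} (l₁ l₂ : List L) :
    ((l₁ ++ l₂).map FreeGroup.of).prod
      = (l₁.map FreeGroup.of).prod * (l₂.map FreeGroup.of).prod := by
  rw [List.map_append, List.prod_append]

/-- The map φ : S^× → F[L], (α,A,β) ↦ αβ⁻¹, is a grading on the
inverse semigroup S: φ(st) = φ(s)φ(t) whenever st ≠ 0; consequently S is
strongly E*-unitary: any nonzero element with trivial grading is idempotent. -/
theorem stmt8 {𝓑 L : Type*} [GeneralizedBooleanAlgebra 𝓑] [DecidableEq L]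
    [DecidableEq 𝓑] (θ : L → 𝓑 → 𝓑) (𝓘 : L → Set 𝓑)
    (hθbot : ∀ a, θ a ⊥ = ⊥)
    (hθsup : ∀ a (x y : 𝓑), θ a (x ⊔ y) = θ a x ⊔ θ a y)
    (hθinf : ∀ a (x y : 𝓑), θ a (x ⊓ y) = θ a x ⊓ θ a y)
    (h𝓘sup : ∀ a, ∀ x ∈ 𝓘 a, ∀ y ∈ 𝓘 a, x ⊔ y ∈ 𝓘 a)
    (h𝓘down : ∀ a, ∀ x ∈ 𝓘 a, ∀ y : 𝓑, y ≤ x → y ∈ 𝓘 a)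
    (h𝓘F : ∀ a (x : 𝓑), θ a x ∈ 𝓘 a) :
    -- φ is a grading: φ(st) = φ(s)φ(t) whenever st ≠ 0
    (∀ u v w : List L × 𝓑 × List L,
      some u ∈ trS θ 𝓘 → some v ∈ trS θ 𝓘 →
      trMul θ (some u) (some v) = some w →
      trGrade w = trGrade u * trGrade v) ∧
    -- consequently S is strongly E*-unitary
    (∀ u : List L × 𝓑 × List L, some u ∈ trS θ 𝓘 →
      trGrade u = 1 → trMul θ (some u) (some u) = some u) := by
  constructor
  · rintro ⟨α, A, β⟩ ⟨γ, C, δ⟩ w _ _ hmul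
    simp only [trMul] at hmul
    split_ifs at hmul with h1 h2 h3 h4 h5 h6
    · obtain rfl := Option.some.injEq .. ▸ hmul
      subst h1
      simp [trGrade, mul_assoc]
    · obtain rfl := Option.some.injEq .. ▸ hmul
      obtain ⟨t, rfl⟩ := h3
      simp only [trGrade, List.drop_left, prodOf_append]
      group
    · obtain rfl := Option.some.injEq .. ▸ hmul
      obtain ⟨t, rfl⟩ := h5
      simp only [trGrade, List.drop_left, prodOf_append, mul_inv_rev]
      group
  · rintro ⟨α, A, β⟩ hu hg
    obtain h | ⟨α', A', β', heq, hA, _, _⟩ := hu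
    · exact absurd h (Option.some_ne_none _)
    obtain ⟨rfl, rfl, rfl⟩ : α = α' ∧ A = A' ∧ β = β' := by
      simpa [Prod.ext_iff] using heq
    have hαβ : α = β := by
      apply prodOf_injective
      simpa [trGrade, mul_inv_eq_one] using hg
    subst hαβ
    simp [trMul, inf_idem, hA]
end

section
/- The natural order on idempotents of the inverse semigroup S satisfies: (α, A, α) ≤ (β, B, β) if and only if α = βα' for some word α' and A ⊆ θ_{α'}(B). -/
/-- The natural order on idempotents of the inverse semigroup S
(e ≤ f iff ef = e) satisfies: (α,A,α) ≤ (β,B,β) if and only if α = βα' for some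
word α' and A ⊆ θ_{α'}(B). -/
theorem stmt9 {𝓑 L : Type*} [GeneralizedBooleanAlgebra 𝓑] [DecidableEq L]
    [DecidableEq 𝓑] (θ : L → 𝓑 → 𝓑) (𝓘 : L → Set 𝓑)
    (hθbot : ∀ a, θ a ⊥ = ⊥)
    (hθsup : ∀ a (x y : 𝓑), θ a (x ⊔ y) = θ a x ⊔ θ a y)
    (hθinf : ∀ a (x y : 𝓑), θ a (x ⊓ y) = θ a x ⊓ θ a y)
    (h𝓘sup : ∀ a, ∀ x ∈ 𝓘 a, ∀ y ∈ 𝓘 a, x ⊔ y ∈ 𝓘 a)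
    (h𝓘down : ∀ a, ∀ x ∈ 𝓘 a, ∀ y : 𝓑, y ≤ x → y ∈ 𝓘 a)
    (h𝓘F : ∀ a (x : 𝓑), θ a x ∈ 𝓘 a)
    (α β : List L) (A B : 𝓑)
    (hA : some (α, A, α) ∈ trS θ 𝓘) (hAne : A ≠ ⊥)
    (hB : some (β, B, β) ∈ trS θ 𝓘) (hBne : B ≠ ⊥) :
    trMul θ (some (α, A, α)) (some (β, B, β)) = some (α, A, α) ↔
      ∃ α' : List L, α = β ++ α' ∧ A ≤ thetaW θ α' B := by
  have hdrop : β <+: α → β ++ α.drop β.length = α := by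
    rintro ⟨t, rfl⟩; rw [List.drop_left]
  simp only [trMul]
  split_ifs with h1 h2 h3 h4 h5 h6
  · -- α = β, A ⊓ B = ⊥ : both sides false
    subst h1
    simp only [false_iff]
    rintro ⟨α', hα', hle⟩
    have : α' = [] := by simpa using hα'
    subst this
    simp only [thetaW] at hle
    exact hAne (by rw [← inf_eq_left.mpr hle, h2])
  · -- α = β, A ⊓ B ≠ ⊥
    subst h1
    constructor
    · intro h
      simp only [Option.some.injEq, Prod.mk.injEq] at h
      exact ⟨[], by simp, le_of_inf_eq h.2.1⟩
    · rintro ⟨α', hα', hle⟩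
      have : α' = [] := by simpa using hα'
      subst this
      simp only [thetaW] at hle
      rw [inf_eq_left.mpr hle]
  · -- α ≠ β, α <+: β, bot : both false
    constructor
    · intro h; simp at h
    · rintro ⟨α', hα', hle⟩
      have h2 : α.length ≤ β.length := h3.length_le
      have h3' : α.length = β.length + α'.length := by
        rw [hα']; simp
      have : α' = [] := List.eq_nil_of_length_eq_zero (by omega)
      exact h1 (by simpa [this] using hα')
  · -- α ≠ β, α <+: β, not bot : LHS forces β = α, contra
    constructor
    · intro h
      simp only [Option.some.injEq, Prod.mk.injEq] at h
      exact absurd h.2.2.symm h1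
    · rintro ⟨α', hα', hle⟩
      have h2 : α.length ≤ β.length := h3.length_le
      have h3' : α.length = β.length + α'.length := by rw [hα']; simp
      have : α' = [] := List.eq_nil_of_length_eq_zero (by omega)
      exact absurd (by simpa [this] using hα') h1
  · -- β <+: α, bot : both false
    constructor
    · intro h; simp at h
    · rintro ⟨α', hα', hle⟩
      have hd : α.drop β.length = α' := by rw [hα', List.drop_left]
      rw [hd] at h6
      exact hAne (by rw [← inf_eq_left.mpr hle, h6])
  · -- β <+: α, not bot : main case
    constructor
    · intro h
      simp only [Option.some.injEq, Prod.mk.injEq] at h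
      exact ⟨α.drop β.length, (hdrop h5).symm, le_of_inf_eq h.2.1⟩
    · rintro ⟨α', hα', hle⟩
      have hd : α.drop β.length = α' := by rw [hα', List.drop_left]
      rw [hd, inf_eq_left.mpr hle, hα']
  · -- no prefix relation : both false
    constructor
    · intro h; simp at h
    · rintro ⟨α', hα', hle⟩
      exact absurd ⟨α', hα'.symm⟩ h5
end

section
/- B̃ = {(A, [B]_J) : A, B ∈ B with [A]_{B_reg} = [B]_{B_reg}} with coordinatewise operations is a generalized Boolean algebra, and its regular ideal is B̃_reg = {(A, [∅]_J) : A ∈ B_reg}. -/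
/-!
Write `a ≡ b (mod K)` when `a ⊔ U = b ⊔ U` for some `U ∈ K`. If `K` is closed under `⊔`, this is
a congruence for `⊔`, `⊓` and `\`: take the join `W` of the two witnesses, and note that
`op a c ⊔ W` depends only on `a ⊔ W` and `c ⊔ W`. For `K = J` this makes `B/J` a generalized
Boolean algebra; for `K = B_reg`, which is closed under `⊔` because `Δ_{x ⊔ y} = Δ_x ∪ Δ_y`, it
makes `B̃` a subalgebra of `B × B/J`.

Let `x = (A, [C]_J)` be regular, with `A ⊔ U = C ⊔ U` for a regular `U`. Every nonzero `B ≤ A`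
gives the nonzero element `(B, [B ⊓ C]_J) ≤ x`, so `A` is regular. Then `C ≤ A ⊔ U` is regular,
so `(⊥, [C]_J)` lies in `B̃` below `x`; its Δ-set is empty, so it is zero, i.e.
`[C]_J = [⊥]_J`. Conversely, every element below `(A, [⊥]_J)` is of the form `(B, [⊥]_J)` with
`B ≤ A`.
-/

namespace BoolDynSys

variable {α L : Type*} [GeneralizedBooleanAlgebra α]

def regularSet (Δ : α → Set L) : Set α :=
  {A | ∀ B ≤ A, B ≠ ⊥ → (Δ B).Finite ∧ (Δ B).Nonempty}

section Regular

variable {Δ : α → Set L}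

theorem bot_mem_regularSet : ⊥ ∈ regularSet Δ :=
  fun _ hB hB0 => absurd (le_bot_iff.1 hB) hB0

theorem finite_of_le_mem_regularSet (hΔbot : Δ ⊥ = ∅) {A B : α} (hA : A ∈ regularSet Δ)
    (hBA : B ≤ A) : (Δ B).Finite := by
  obtain rfl | hB0 := eq_or_ne B ⊥
  · simp [hΔbot]
  · exact (hA B hBA hB0).1

theorem supClosed_regularSet (hΔbot : Δ ⊥ = ∅) (hΔsup : ∀ x y, Δ (x ⊔ y) = Δ x ∪ Δ y) :
    SupClosed (regularSet Δ) := by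
  intro A hA A' hA' B hB hB0
  have hsplit : Δ B = Δ (B ⊓ A) ∪ Δ (B \ A) := by rw [← hΔsup, sup_inf_sdiff]
  have hBA' : B \ A ≤ A' := sdiff_le_iff.2 hB
  refine ⟨hsplit ▸ (finite_of_le_mem_regularSet hΔbot hA inf_le_right).union
    (finite_of_le_mem_regularSet hΔbot hA' hBA'), ?_⟩
  rw [hsplit]
  by_cases hBA : B ⊓ A = ⊥
  · have hB0' : B \ A ≠ ⊥ := fun h => hB0 (by rw [← sup_inf_sdiff B A, hBA, h, sup_bot_eq])
    exact (hA' _ hBA' hB0').2.inr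
  · exact (hA _ inf_le_right hBA).2.inl

end Regular

def delta (θ : L → α → α) (A : α) : Set L := {a | θ a A ≠ ⊥}

theorem delta_bot {θ : L → α → α} (hθ : ∀ a, θ a ⊥ = ⊥) : delta θ ⊥ = ∅ := by
  simp [delta, hθ]

theorem delta_sup {θ : L → α → α} (hθ : ∀ a x y, θ a (x ⊔ y) = θ a x ⊔ θ a y) (x y : α) :
    delta θ (x ⊔ y) = delta θ x ∪ delta θ y := by
  ext a
  show θ a (x ⊔ y) ≠ ⊥ ↔ θ a x ≠ ⊥ ∨ θ a y ≠ ⊥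
  rw [hθ, ne_eq, sup_eq_bot_iff, not_and_or]

section EqMod

variable {K : Set α}

def EqMod (K : Set α) (a b : α) : Prop := ∃ U ∈ K, a ⊔ U = b ⊔ U

theorem eqMod_bot_of_le {U C : α} (hU : U ∈ K) (hCU : C ≤ U) : EqMod K ⊥ C :=
  ⟨U, hU, by rw [bot_sup_eq, sup_eq_right.2 hCU]⟩

theorem EqMod.congr₂ (hK : SupClosed K) {f : α → α → α}
    (hf : ∀ W a b c d : α, a ⊔ W = b ⊔ W → c ⊔ W = d ⊔ W → f a c ⊔ W = f b d ⊔ W)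
    {a b c d : α} : EqMod K a b → EqMod K c d → EqMod K (f a c) (f b d) := by
  rintro ⟨U, hU, hab⟩ ⟨V, hV, hcd⟩
  refine ⟨U ⊔ V, hK hU hV, hf _ _ _ _ _ ?_ ?_⟩
  · rw [← sup_assoc, hab, sup_assoc]
  · rw [sup_left_comm, hcd, sup_left_comm]

theorem EqMod.sup (hK : SupClosed K) {a b c d : α} :
    EqMod K a b → EqMod K c d → EqMod K (a ⊔ c) (b ⊔ d) :=
  EqMod.congr₂ hK fun W a b c d hab hcd => by
    rw [sup_sup_distrib_right, hab, hcd, ← sup_sup_distrib_right]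

theorem EqMod.inf (hK : SupClosed K) {a b c d : α} :
    EqMod K a b → EqMod K c d → EqMod K (a ⊓ c) (b ⊓ d) :=
  EqMod.congr₂ hK fun W a b c d hab hcd => by rw [sup_inf_right, hab, hcd, ← sup_inf_right]

theorem sdiff_sup_eq_sup_sdiff_sup_sup (a c W : α) : a \ c ⊔ W = (a ⊔ W) \ (c ⊔ W) ⊔ W := by
  rw [sup_comm c W, ← sdiff_sdiff_left, sup_sdiff_right_self, sdiff_sdiff_comm, sdiff_sup_self]

theorem EqMod.sdiff (hK : SupClosed K) {a b c d : α} :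
    EqMod K a b → EqMod K c d → EqMod K (a \ c) (b \ d) :=
  EqMod.congr₂ hK fun W a b c d hab hcd => by
    rw [sdiff_sup_eq_sup_sdiff_sup_sup, hab, hcd, ← sdiff_sup_eq_sup_sdiff_sup_sup]

theorem EqMod.refl (hK0 : ⊥ ∈ K) (a : α) : EqMod K a a := ⟨⊥, hK0, rfl⟩

theorem EqMod.inf_left_of_le (hK0 : ⊥ ∈ K) (hK : SupClosed K) {A B C : α} (h : EqMod K A C)
    (hBA : B ≤ A) : EqMod K B (B ⊓ C) := by
  simpa only [inf_eq_left.2 hBA] using (EqMod.refl hK0 B).inf hK h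

end EqMod

structure IsGBACongr (s : Setoid α) : Prop where
  sup {a b c d : α} : a ≈ b → c ≈ d → a ⊔ c ≈ b ⊔ d
  inf {a b c d : α} : a ≈ b → c ≈ d → a ⊓ c ≈ b ⊓ d
  sdiff {a b c d : α} : a ≈ b → c ≈ d → a \ c ≈ b \ d

theorem isGBACongr_of_eqMod {K : Set α} (hK : SupClosed K) {s : Setoid α}
    (hs : ∀ a b, s.r a b ↔ EqMod K a b) : IsGBACongr s where
  sup hab hcd := (hs _ _).2 (((hs _ _).1 hab).sup hK ((hs _ _).1 hcd))
  inf hab hcd := (hs _ _).2 (((hs _ _).1 hab).inf hK ((hs _ _).1 hcd))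
  sdiff hab hcd := (hs _ _).2 (((hs _ _).1 hab).sdiff hK ((hs _ _).1 hcd))

theorem transGen_le_or_equiv_iff {β : Type*} [SemilatticeSup β] {s : Setoid β}
    (hs : ∀ {a b c d : β}, a ≈ b → c ≈ d → a ⊔ c ≈ b ⊔ d) {a b : β} :
    Relation.TransGen (fun x y => x ≤ y ∨ x ≈ y) a b ↔ a ⊔ b ≈ b := by
  have step : ∀ {x y : β}, x ≤ y ∨ x ≈ y → x ⊔ y ≈ y := by
    rintro x y (hxy | hxy)
    · rw [sup_eq_right.2 hxy]
    · simpa only [sup_idem] using hs hxy (Setoid.refl y)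
  refine ⟨fun h => ?_, fun h => .tail (.single (.inl le_sup_left)) (.inr h)⟩
  induction h with
  | single hab => exact step hab
  | @tail b c _ hbc ih =>
    calc a ⊔ c ≈ a ⊔ (b ⊔ c) := hs (Setoid.refl a) (Setoid.symm (step hbc))
      _ = a ⊔ b ⊔ c := (sup_assoc a b c).symm
      _ ≈ b ⊔ c := hs ih (Setoid.refl c)
      _ ≈ c := step hbc

namespace IsGBACongr

variable {s : Setoid α} (hs : IsGBACongr s)

abbrev quotientGeneralizedBooleanAlgebra : GeneralizedBooleanAlgebra (Quotient s) :=
  letI : Max (Quotient s) := ⟨Quotient.map₂ (· ⊔ ·) fun _ _ hab _ _ hcd => hs.sup hab hcd⟩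
  letI : Min (Quotient s) := ⟨Quotient.map₂ (· ⊓ ·) fun _ _ hab _ _ hcd => hs.inf hab hcd⟩
  letI : SDiff (Quotient s) := ⟨Quotient.map₂ (· \ ·) fun _ _ hab _ _ hcd => hs.sdiff hab hcd⟩
  letI : Bot (Quotient s) := ⟨Quotient.mk s ⊥⟩
  letI lattice : Lattice (Quotient s) := Lattice.mk'
    (fun x y => Quotient.inductionOn₂ x y fun a b => congrArg (Quotient.mk s) (sup_comm a b))
    (fun x y z => Quotient.inductionOn₃ x y z fun a b c =>
      congrArg (Quotient.mk s) (sup_assoc a b c))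
    (fun x y => Quotient.inductionOn₂ x y fun a b => congrArg (Quotient.mk s) (inf_comm a b))
    (fun x y z => Quotient.inductionOn₃ x y z fun a b c =>
      congrArg (Quotient.mk s) (inf_assoc a b c))
    (fun x y => Quotient.inductionOn₂ x y fun a b => congrArg (Quotient.mk s) sup_inf_self)
    (fun x y => Quotient.inductionOn₂ x y fun a b => congrArg (Quotient.mk s) inf_sup_self)
  letI distrib : DistribLattice (Quotient s) :=
    { lattice with
      le_sup_inf := by
        intro x y z
        induction x, y, z using Quotient.inductionOn₃ with
        | h a b c =>
          exact @Eq.le _ lattice.toPreorder _ _ (congrArg (Quotient.mk s) (sup_inf_left ..).symm) }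
  -- copied so that the order is the one of the global instance `Quotient.instPreorder`
  { DistribLattice.copy distrib (@LE.le _ Quotient.instLE_mathlib) (by
        ext x y
        induction x using Quotient.inductionOn
        induction y using Quotient.inductionOn
        exact Quotient.le_def.trans ((transGen_le_or_equiv_iff hs.sup).trans Quotient.eq.symm))
      _ rfl _ rfl with
    sup_inf_sdiff := fun x y => Quotient.inductionOn₂ x y fun a b =>
      congrArg (Quotient.mk s) (sup_inf_sdiff a b)
    inf_inf_sdiff := fun x y => Quotient.inductionOn₂ x y fun a b =>
      congrArg (Quotient.mk s) (inf_inf_sdiff a b) }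

end IsGBACongr

/-- The paper's `B̃`, for `K = B_reg` and `s` the congruence modulo `J`. -/
def tilde (K : Set α) (s : Setoid α) : Set (α × Quotient s) :=
  {x | ∃ C, x.2 = Quotient.mk s C ∧ EqMod K x.1 C}

section Tilde

variable {K : Set α} {s : Setoid α}

theorem map₂_mem_tilde {f : α → α → α} {g : Quotient s → Quotient s → Quotient s}
    (hf : ∀ {a b c d}, EqMod K a b → EqMod K c d → EqMod K (f a c) (f b d))
    (hg : ∀ a b, g (Quotient.mk s a) (Quotient.mk s b) = Quotient.mk s (f a b))
    {x y : α × Quotient s} (hx : x ∈ tilde K s) (hy : y ∈ tilde K s) :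
    (f x.1 y.1, g x.2 y.2) ∈ tilde K s := by
  obtain ⟨C, hC, hxC⟩ := hx
  obtain ⟨C', hC', hyC'⟩ := hy
  exact ⟨f C C', by rw [hC, hC', hg], hf hxC hyC'⟩

abbrev tilde.generalizedBooleanAlgebra (hK0 : ⊥ ∈ K) (hK : SupClosed K) (hs : IsGBACongr s) :
    GeneralizedBooleanAlgebra (tilde K s) :=
  letI := hs.quotientGeneralizedBooleanAlgebra
  letI : Max (tilde K s) :=
    ⟨fun x y => ⟨x.1 ⊔ y.1, map₂_mem_tilde (EqMod.sup hK) (fun _ _ => rfl) x.2 y.2⟩⟩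
  letI : Min (tilde K s) :=
    ⟨fun x y => ⟨x.1 ⊓ y.1, map₂_mem_tilde (EqMod.inf hK) (fun _ _ => rfl) x.2 y.2⟩⟩
  letI : SDiff (tilde K s) :=
    ⟨fun x y => ⟨x.1 \ y.1, map₂_mem_tilde (EqMod.sdiff hK) (fun _ _ => rfl) x.2 y.2⟩⟩
  letI : Bot (tilde K s) := ⟨⟨⊥, ⊥, rfl, EqMod.refl hK0 ⊥⟩⟩
  letI : LT (tilde K s) := ⟨fun x y => x ≤ y ∧ ¬ y ≤ x⟩
  Subtype.val_injective.generalizedBooleanAlgebra _ Iff.rfl lt_iff_le_not_ge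
    (fun _ _ => rfl) (fun _ _ => rfl) rfl (fun _ _ => rfl)

end Tilde

/-- Regularity in `B̃` refers to the maps `θ̃`, whose Δ-sets are `Δ_θ̃(A, [B]_J) = Δ_θ(A)`. -/
theorem regularSet_tilde {Δ : α → Set L} {s : Setoid α} (hΔbot : Δ ⊥ = ∅)
    (hΔsup : ∀ x y, Δ (x ⊔ y) = Δ x ∪ Δ y) (hs : IsGBACongr s) :
    letI := tilde.generalizedBooleanAlgebra bot_mem_regularSet (supClosed_regularSet hΔbot hΔsup) hs
    regularSet (fun y : tilde (regularSet Δ) s => Δ y.1.1) =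
      {x | ∃ A ∈ regularSet Δ, x.1 = (A, Quotient.mk s ⊥)} := by
  have hK := supClosed_regularSet hΔbot hΔsup
  let := hs.quotientGeneralizedBooleanAlgebra
  let := tilde.generalizedBooleanAlgebra bot_mem_regularSet hK hs
  ext ⟨⟨A, q⟩, C, hq, hAC⟩
  constructor
  · intro hx
    have hA : A ∈ regularSet Δ := fun B hBA hB0 =>
      hx ⟨(B, Quotient.mk s (B ⊓ C)), B ⊓ C, rfl, hAC.inf_left_of_le bot_mem_regularSet hK hBA⟩
        ⟨hBA, by rw [hq]; exact Quotient.mk_monotone inf_le_right⟩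
        fun h => hB0 (congrArg (fun z : tilde _ s => z.1.1) h)
    obtain ⟨U, hU, hAU⟩ := hAC
    let y : tilde (regularSet Δ) s :=
      ⟨(⊥, Quotient.mk s C), C, rfl, eqMod_bot_of_le (hK hA hU) (le_sup_left.trans_eq hAU.symm)⟩
    have hyx : y ≤ ⟨(A, q), C, hq, U, hU, hAU⟩ := ⟨bot_le, hq.ge⟩
    have hy : y = ⊥ := by_contra fun h => (hx y hyx h).2.ne_empty hΔbot
    exact ⟨A, hA, congrArg (Prod.mk A) (hq.trans (congrArg (fun z : tilde _ s => z.1.2) hy))⟩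
  · rintro ⟨A', hA', hx⟩ y hyx hy0
    cases hx
    have hy2 : y.1.2 = ⊥ := le_bot_iff.1 hyx.2
    exact hA' y.1.1 hyx.1 fun hy1 => hy0 (Subtype.ext (Prod.ext hy1 hy2))

end BoolDynSys

theorem stmt10_general {𝓑 L : Type*} [GeneralizedBooleanAlgebra 𝓑]
    (θ : L → 𝓑 → 𝓑)
    (hθbot : ∀ a, θ a ⊥ = ⊥)
    (hθsup : ∀ a (x y : 𝓑), θ a (x ⊔ y) = θ a x ⊔ θ a y)
    (Breg J : Set 𝓑)
    (hreg : Breg = {A : 𝓑 | ∀ B' : 𝓑, B' ≤ A → B' ≠ ⊥ →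
      {a : L | θ a B' ≠ ⊥}.Finite ∧ {a : L | θ a B' ≠ ⊥}.Nonempty})
    (hJsup : ∀ x ∈ J, ∀ y ∈ J, x ⊔ y ∈ J)
    (sJ : Setoid 𝓑)
    (hsJ : ∀ a b : 𝓑, sJ.r a b ↔ ∃ U ∈ J, a ⊔ U = b ⊔ U) :
    ∃ inst : GeneralizedBooleanAlgebra
      {x : 𝓑 × Quotient sJ //
        ∃ C : 𝓑, x.2 = Quotient.mk sJ C ∧ ∃ U ∈ Breg, x.1 ⊔ U = C ⊔ U},
      letI := inst
      -- the operations are coordinatewise (on representatives in the second coordinate)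
      (∀ (x y : {x : 𝓑 × Quotient sJ //
          ∃ C : 𝓑, x.2 = Quotient.mk sJ C ∧ ∃ U ∈ Breg, x.1 ⊔ U = C ⊔ U})
         (A C A' C' : 𝓑),
          x.1 = (A, Quotient.mk sJ C) → y.1 = (A', Quotient.mk sJ C') →
          (x ⊔ y).1 = (A ⊔ A', Quotient.mk sJ (C ⊔ C')) ∧
          (x ⊓ y).1 = (A ⊓ A', Quotient.mk sJ (C ⊓ C')) ∧
          (x \ y).1 = (A \ A', Quotient.mk sJ (C \ C'))) ∧
      ((⊥ : {x : 𝓑 × Quotient sJ //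
          ∃ C : 𝓑, x.2 = Quotient.mk sJ C ∧ ∃ U ∈ Breg, x.1 ⊔ U = C ⊔ U}).1 =
        (⊥, Quotient.mk sJ ⊥)) ∧
      -- the regular ideal of B̃ is {(A, [∅]_J) : A ∈ B_reg}
      ({x : {x : 𝓑 × Quotient sJ //
          ∃ C : 𝓑, x.2 = Quotient.mk sJ C ∧ ∃ U ∈ Breg, x.1 ⊔ U = C ⊔ U} |
          ∀ y, y ≤ x → y ≠ ⊥ →
            {a : L | θ a y.1.1 ≠ ⊥}.Finite ∧ {a : L | θ a y.1.1 ≠ ⊥}.Nonempty} =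
        {x | ∃ A ∈ Breg, x.1 = (A, Quotient.mk sJ ⊥)}) := by
  open BoolDynSys in
  subst hreg
  have hΔbot := delta_bot hθbot
  have hΔsup := delta_sup hθsup
  have hs : IsGBACongr sJ := isGBACongr_of_eqMod hJsup hsJ
  refine ⟨tilde.generalizedBooleanAlgebra bot_mem_regularSet (supClosed_regularSet hΔbot hΔsup) hs,
    ?_, rfl, regularSet_tilde hΔbot hΔsup hs⟩
  rintro ⟨⟨_, _⟩, _⟩ ⟨⟨_, _⟩, _⟩ A C A' C' ⟨⟩ ⟨⟩
  exact ⟨rfl, rfl, rfl⟩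

/-- For a relative generalized Boolean dynamical system
(B,L,θ,I,J), the set B̃ = {(A,[B]_J) : A,B ∈ B, [A]_{B_reg} = [B]_{B_reg}} with
coordinatewise operations is a generalized Boolean algebra, and its regular
ideal is B̃_reg = {(A,[∅]_J) : A ∈ B_reg}.  Here [·]_J is realized as the
quotient by the setoid sJ (specified by A ~ B ↔ ∃ U ∈ J, A ⊔ U = B ⊔ U), B_reg
is the ideal of regular sets, and regularity in B̃ is defined via the maps
θ̃_a(A,[B]_J) = (θ_a(A), [θ_a(A)]_J), whose Δ-sets are {a : θ_a(A) ≠ ⊥}. -/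
theorem stmt10 {𝓑 L : Type*} [GeneralizedBooleanAlgebra 𝓑]
    (θ : L → 𝓑 → 𝓑)
    (hθbot : ∀ a, θ a ⊥ = ⊥)
    (hθsup : ∀ a (x y : 𝓑), θ a (x ⊔ y) = θ a x ⊔ θ a y)
    (hθinf : ∀ a (x y : 𝓑), θ a (x ⊓ y) = θ a x ⊓ θ a y)
    (Breg J : Set 𝓑)
    (hreg : Breg = {A : 𝓑 | ∀ B' : 𝓑, B' ≤ A → B' ≠ ⊥ →
      {a : L | θ a B' ≠ ⊥}.Finite ∧ {a : L | θ a B' ≠ ⊥}.Nonempty})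
    (hJreg : J ⊆ Breg)
    (hJsup : ∀ x ∈ J, ∀ y ∈ J, x ⊔ y ∈ J)
    (hJdown : ∀ x ∈ J, ∀ y : 𝓑, y ≤ x → y ∈ J)
    (sJ : Setoid 𝓑)
    (hsJ : ∀ a b : 𝓑, sJ.r a b ↔ ∃ U ∈ J, a ⊔ U = b ⊔ U) :
    ∃ inst : GeneralizedBooleanAlgebra
      {x : 𝓑 × Quotient sJ //
        ∃ C : 𝓑, x.2 = Quotient.mk sJ C ∧ ∃ U ∈ Breg, x.1 ⊔ U = C ⊔ U},
      letI := inst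
      -- the operations are coordinatewise (on representatives in the second coordinate)
      (∀ (x y : {x : 𝓑 × Quotient sJ //
          ∃ C : 𝓑, x.2 = Quotient.mk sJ C ∧ ∃ U ∈ Breg, x.1 ⊔ U = C ⊔ U})
         (A C A' C' : 𝓑),
          x.1 = (A, Quotient.mk sJ C) → y.1 = (A', Quotient.mk sJ C') →
          (x ⊔ y).1 = (A ⊔ A', Quotient.mk sJ (C ⊔ C')) ∧
          (x ⊓ y).1 = (A ⊓ A', Quotient.mk sJ (C ⊓ C')) ∧
          (x \ y).1 = (A \ A', Quotient.mk sJ (C \ C'))) ∧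
      ((⊥ : {x : 𝓑 × Quotient sJ //
          ∃ C : 𝓑, x.2 = Quotient.mk sJ C ∧ ∃ U ∈ Breg, x.1 ⊔ U = C ⊔ U}).1 =
        (⊥, Quotient.mk sJ ⊥)) ∧
      -- the regular ideal of B̃ is {(A, [∅]_J) : A ∈ B_reg}
      ({x : {x : 𝓑 × Quotient sJ //
          ∃ C : 𝓑, x.2 = Quotient.mk sJ C ∧ ∃ U ∈ Breg, x.1 ⊔ U = C ⊔ U} |
          ∀ y, y ≤ x → y ≠ ⊥ →
            {a : L | θ a y.1.1 ≠ ⊥}.Finite ∧ {a : L | θ a y.1.1 ≠ ⊥}.Nonempty} =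
        {x | ∃ A ∈ Breg, x.1 = (A, Quotient.mk sJ ⊥)}) :=
  stmt10_general θ hθbot hθsup Breg J hreg hJsup sJ hsJ
end

section
/- In L_R(B,L,θ,I), Ann_S(I) = span_R{p_A : A ∈ B_sink}, where S = span_R{p_A : A ∈ B}, I = span_R{s_{a,A} : a ∈ L, A ∈ I_a}, and B_sink = {A ∈ B : Δ_A = ∅}. -/
/-- In L_R(B,L,θ,I) (formalized as any R-algebra carrying elements
p, s, s* satisfying the defining relations together with the nonvanishing facts
rp_A ≠ 0 and rs_{a,A} ≠ 0), with S = span_R{p_A : A ∈ B},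
I = span_R{s_{a,A} : a ∈ L, A ∈ I_a} and B_sink = {A : Δ_A = ∅}, one has
Ann_S(I) = span_R{p_A : A ∈ B_sink}. -/
theorem stmt11 {R A 𝓑 L : Type*} [CommRing R] [Ring A] [Algebra R A]
    [GeneralizedBooleanAlgebra 𝓑] [DecidableEq L]
    (θ : L → 𝓑 → 𝓑) (𝓘 : L → Set 𝓑)
    (hθbot : ∀ a, θ a ⊥ = ⊥)
    (hθinf : ∀ a (x y : 𝓑), θ a (x ⊓ y) = θ a x ⊓ θ a y)
    (hθsup : ∀ a (x y : 𝓑), θ a (x ⊔ y) = θ a x ⊔ θ a y)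
    (hθI : ∀ a (x : 𝓑), θ a x ∈ 𝓘 a)
    (p : 𝓑 → A) (s t : L → 𝓑 → A)
    (R1a : p ⊥ = 0)
    (R1b : ∀ x y : 𝓑, p (x ⊓ y) = p x * p y)
    (R1c : ∀ x y : 𝓑, p (x ⊔ y) = p x + p y - p (x ⊓ y))
    (R2a : ∀ a, ∀ b ∈ 𝓘 a, ∀ x : 𝓑, p x * s a b = s a b * p (θ a x))
    (R2b : ∀ a, ∀ b ∈ 𝓘 a, ∀ x : 𝓑, t a b * p x = p (θ a x) * t a b)
    (R3 : ∀ a a', ∀ b ∈ 𝓘 a, ∀ b' ∈ 𝓘 a',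
      t a b * s a' b' = if a = a' then p (b ⊓ b') else 0)
    (R4a : ∀ a, ∀ b ∈ 𝓘 a, ∀ x : 𝓑, s a b * p x = s a (b ⊓ x))
    (R4b : ∀ a, ∀ b ∈ 𝓘 a, ∀ x : 𝓑, p x * t a b = t a (b ⊓ x))
    -- nonvanishing: rp_A ≠ 0 for 0 ≠ r, ∅ ≠ A; rs_{a,A} ≠ 0 for ∅ ≠ A ∈ I_a
    (hp0 : ∀ r : R, r ≠ 0 → ∀ x : 𝓑, x ≠ ⊥ → r • p x ≠ 0)
    (hs0 : ∀ r : R, r ≠ 0 → ∀ a, ∀ b ∈ 𝓘 a, b ≠ ⊥ → r • s a b ≠ 0) :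
    {x : A | x ∈ Submodule.span R (Set.range p) ∧
        ∀ y ∈ Submodule.span R {z : A | ∃ a, ∃ b ∈ 𝓘 a, z = s a b}, x * y = 0} =
      ↑(Submodule.span R (p '' {x : 𝓑 | ∀ a : L, θ a x = ⊥})) := by

  classical
  have hbot : ∀ {x y z w : 𝓑}, x ≤ z → y ≤ w → z ⊓ w = ⊥ → x ⊓ y = ⊥ := by
    intro x y z w hx hy h
    exact le_bot_iff.mp (h ▸ inf_le_inf hx hy)
  have hadd : ∀ x y : 𝓑, x ⊓ y = ⊥ → p (x ⊔ y) = p x + p y := by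
    intro x y h; rw [R1c, h, R1a, sub_zero]
  -- finite additivity of p over pairwise disjoint families
  have hsum : ∀ {ι : Type} [DecidableEq ι] (u : Finset ι) (B : ι → 𝓑),
      (∀ i ∈ u, ∀ j ∈ u, i ≠ j → B i ⊓ B j = ⊥) →
      p (u.sup B) = ∑ i ∈ u, p (B i) := by
    intro ι _ u B
    induction u using Finset.induction_on with
    | empty => intro _; simp [R1a]
    | @insert a u hnot ih =>
      intro hdisj
      have hd : B a ⊓ u.sup B = ⊥ := by
        refine disjoint_iff.mp ?_
        rw [Finset.disjoint_sup_right]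
        intro i hi
        exact disjoint_iff.mpr (hdisj a (Finset.mem_insert_self a u) i
          (Finset.mem_insert_of_mem hi) (by rintro rfl; exact hnot hi))
      rw [Finset.sup_insert, hadd _ _ hd, Finset.sum_insert hnot,
        ih (fun i hi j hj hij => hdisj i (Finset.mem_insert_of_mem hi) j
          (Finset.mem_insert_of_mem hj) hij)]
  -- every element of span (range p) has a pairwise-disjoint representation
  have hrepr : ∀ (n : ℕ) (c : Fin n → R) (A₀ : Fin n → 𝓑),
      ∃ (ι : Type) (_ : Fintype ι) (d : ι → R) (B : ι → 𝓑),
        (∀ i j : ι, i ≠ j → B i ⊓ B j = ⊥) ∧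
        ∑ i, c i • p (A₀ i) = ∑ i, d i • p (B i) := by
    intro n
    induction n with
    | zero =>
      intro c A₀
      exact ⟨Fin 0, inferInstance, Fin.elim0, Fin.elim0, by intro i; exact i.elim0, by simp⟩
    | succ m ih =>
      intro c A₀
      obtain ⟨ι, instF, d, B, hdisj, hs'⟩ := ih (fun i => c i.succ) (fun i => A₀ i.succ)
      set a := A₀ 0 with ha
      set e := c 0 with he
      set C := Finset.univ.sup B with hC
      refine ⟨(ι ⊕ ι) ⊕ Unit, inferInstance,
        Sum.elim (Sum.elim (fun i => d i + e) d) (fun _ => e),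
        Sum.elim (Sum.elim (fun i => B i ⊓ a) (fun i => B i \ a)) (fun _ => a \ C),
        ?_, ?_⟩
      · rintro (⟨i | i⟩ | ⟨⟩) (⟨j | j⟩ | ⟨⟩) hij <;>
          simp only [Sum.elim_inl, Sum.elim_inr]
        · exact hbot inf_le_left inf_le_left
            (hdisj i j (by rintro rfl; exact hij rfl))
        · by_cases h : i = j
          · subst h
            exact hbot inf_le_right le_rfl inf_sdiff_self_right
          · exact hbot inf_le_left sdiff_le (hdisj i j h)
        · exact hbot (inf_le_left.trans (Finset.le_sup (Finset.mem_univ i)))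
            le_rfl inf_sdiff_self_right
        · by_cases h : i = j
          · subst h
            exact hbot le_rfl inf_le_right inf_sdiff_self_left
          · exact hbot sdiff_le inf_le_left (hdisj i j h)
        · exact hbot sdiff_le sdiff_le (hdisj i j (by rintro rfl; exact hij rfl))
        · exact hbot (sdiff_le.trans (Finset.le_sup (Finset.mem_univ i)))
            le_rfl inf_sdiff_self_right
        · exact hbot le_rfl (inf_le_left.trans (Finset.le_sup (Finset.mem_univ j)))
            inf_sdiff_self_left
        · exact hbot le_rfl (sdiff_le.trans (Finset.le_sup (Finset.mem_univ j)))
            inf_sdiff_self_left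
        · exact absurd rfl hij
      · have hsplit : ∀ i : ι, p (B i) = p (B i ⊓ a) + p (B i \ a) := by
          intro i
          conv_lhs => rw [← sup_inf_sdiff (B i) a]
          exact hadd _ _ (inf_inf_sdiff _ _)
        have hpa : p a = (∑ i : ι, p (B i ⊓ a)) + p (a \ C) := by
          have h2 : (C ⊓ a) ⊔ (a \ C) = a := by rw [inf_comm]; exact sup_inf_sdiff a C
          have h3 : C ⊓ a = Finset.univ.sup (fun i => B i ⊓ a) :=
            Finset.sup_inf_distrib_right _ _ _
          calc p a = p ((C ⊓ a) ⊔ (a \ C)) := by rw [h2]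
            _ = p (C ⊓ a) + p (a \ C) := by
                refine hadd _ _ ?_
                exact hbot inf_le_left le_rfl inf_sdiff_self_right
            _ = (∑ i : ι, p (B i ⊓ a)) + p (a \ C) := by
                rw [h3, hsum Finset.univ (fun i => B i ⊓ a)
                  (fun i _ j _ hij => hbot inf_le_left inf_le_left (hdisj i j hij))]
        rw [Fin.sum_univ_succ, hs', Fintype.sum_sum_type, Fintype.sum_sum_type]
        simp only [Sum.elim_inl, Sum.elim_inr]
        rw [Finset.sum_const, Finset.card_univ]
        have hu : (Fintype.card Unit) • (e • p (a \ C)) = e • p (a \ C) := by simp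
        rw [hu]
        have h4 : ∑ i : ι, (d i + e) • p (B i ⊓ a)
            = (∑ i : ι, d i • p (B i ⊓ a)) + ∑ i : ι, e • p (B i ⊓ a) := by
          rw [← Finset.sum_add_distrib]
          exact Finset.sum_congr rfl (fun i _ => add_smul _ _ _)
        rw [h4]
        have h5 : ∑ i : ι, d i • p (B i) =
            (∑ i : ι, d i • p (B i ⊓ a)) + ∑ i : ι, d i • p (B i \ a) := by
          rw [← Finset.sum_add_distrib]
          exact Finset.sum_congr rfl (fun i _ => by rw [hsplit i, smul_add])
        have h6 : e • p a = (∑ i : ι, e • p (B i ⊓ a)) + e • p (a \ C) := by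
          rw [hpa, smul_add, Finset.smul_sum]
        rw [h5, h6]
        abel
  -- the annihilation property for elements of the sink span
  have hann : ∀ x ∈ Submodule.span R (p '' {x : 𝓑 | ∀ a : L, θ a x = ⊥}),
      ∀ y ∈ Submodule.span R {z : A | ∃ a, ∃ b ∈ 𝓘 a, z = s a b}, x * y = 0 := by
    intro x hx
    induction hx using Submodule.span_induction with
    | mem z hz =>
      obtain ⟨w, hw, rfl⟩ := hz
      intro y hy
      induction hy using Submodule.span_induction with
      | mem u hu =>
        obtain ⟨l, b, hb, rfl⟩ := hu
        rw [R2a l b hb w, hw l, R1a, mul_zero]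
      | zero => rw [mul_zero]
      | add _ _ _ _ h1 h2 => rw [mul_add, h1, h2, add_zero]
      | smul r _ _ h => rw [mul_smul_comm, h, smul_zero]
    | zero => intro y _; rw [zero_mul]
    | add _ _ _ _ h1 h2 => intro y hy; rw [add_mul, h1 y hy, h2 y hy, add_zero]
    | smul r _ _ h => intro y hy; rw [smul_mul_assoc, h y hy, smul_zero]
  ext x
  simp only [Set.mem_setOf_eq, SetLike.mem_coe]
  constructor
  · rintro ⟨hx1, hx2⟩
    obtain ⟨n, c, g, hg⟩ := Submodule.mem_span_set'.mp hx1
    have : ∀ i : Fin n, ∃ b : 𝓑, p b = (g i : A) := fun i => (g i).2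
    choose A₀ hA₀ using this
    obtain ⟨ι, instF, d, B, hdisj, hs'⟩ := hrepr n c A₀
    have hx : x = ∑ i, d i • p (B i) := by
      rw [← hs', ← hg]
      exact Finset.sum_congr rfl (fun i _ => by rw [hA₀])
    rw [hx]
    refine Submodule.sum_mem _ (fun i _ => ?_)
    by_cases hdi : d i = 0
    · simp [hdi]
    · have key : ∀ l : L, θ l (B i) = ⊥ := by
        intro l
        set C := Finset.univ.sup B with hC
        have hbC : θ l C ∈ 𝓘 l := hθI l C
        have h0 : x * s l (θ l C) = 0 :=
          hx2 _ (Submodule.subset_span ⟨l, θ l C, hbC, rfl⟩)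
        have hx' : x * s l (θ l C) = ∑ j, d j • s l (θ l (B j)) := by
          rw [hx, Finset.sum_mul]
          refine Finset.sum_congr rfl (fun j _ => ?_)
          rw [smul_mul_assoc, R2a l _ hbC, R4a l _ hbC]
          congr 2
          rw [← hθinf, inf_eq_right.mpr (Finset.le_sup (Finset.mem_univ j))]
        have h1 : t l (θ l (B i)) * (∑ j, d j • s l (θ l (B j)))
            = d i • p (θ l (B i)) := by
          rw [Finset.mul_sum]
          rw [Finset.sum_eq_single i]
          · rw [mul_smul_comm, R3 l l _ (hθI _ _) _ (hθI _ _), if_pos rfl,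
              ← hθinf, inf_idem]
          · intro j _ hji
            rw [mul_smul_comm, R3 l l _ (hθI _ _) _ (hθI _ _), if_pos rfl,
              ← hθinf, hdisj i j (Ne.symm hji), hθbot, R1a, smul_zero]
          · intro h; exact absurd (Finset.mem_univ i) h
        have h2 : d i • p (θ l (B i)) = 0 := by
          rw [← h1, ← hx', h0, mul_zero]
        by_contra hne
        exact hp0 (d i) hdi _ hne h2
      exact Submodule.smul_mem _ _ (Submodule.subset_span ⟨B i, key, rfl⟩)
  · intro hx
    refine ⟨Submodule.span_mono (Set.image_subset_range p _) hx, hann x hx⟩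
end

section
/- For a generalized Boolean algebra B, the family {V_x : x ∈ B}, where V_x is the set of filters of B containing x, is itself a generalized Boolean algebra of subsets of the filter space: V_{x ∨ y} = V_x ∪ V_y, V_{x ∧ y} = V_x ∩ V_y, and V_{x \ y} = V_x \ V_y. -/
/-- A filter of a generalized Boolean algebra: a nonempty proper subset closed
upwards and under meets. -/
def IsGBAFilter {𝓑 : Type*} [GeneralizedBooleanAlgebra 𝓑] (F : Set 𝓑) : Prop :=
  F.Nonempty ∧ F ≠ Set.univ ∧ (∀ x ∈ F, ∀ y : 𝓑, x ≤ y → y ∈ F) ∧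
    (∀ x ∈ F, ∀ y ∈ F, x ⊓ y ∈ F)

/-- A prime filter: x ∨ y ∈ F implies x ∈ F or y ∈ F. -/
def IsPrimeGBAFilter {𝓑 : Type*} [GeneralizedBooleanAlgebra 𝓑] (F : Set 𝓑) : Prop :=
  IsGBAFilter F ∧ ∀ x y : 𝓑, x ⊔ y ∈ F → x ∈ F ∨ y ∈ F

lemma gba_sup_mem {𝓑 : Type*} [GeneralizedBooleanAlgebra 𝓑] {F : Set 𝓑}
    (hF : IsGBAFilter F) {x : 𝓑} (hx : x ∈ F) (y : 𝓑) : x ⊔ y ∈ F :=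
  hF.2.2.1 x hx _ le_sup_left

lemma gba_inf_iff {𝓑 : Type*} [GeneralizedBooleanAlgebra 𝓑] {F : Set 𝓑}
    (hF : IsGBAFilter F) (x y : 𝓑) : x ⊓ y ∈ F ↔ x ∈ F ∧ y ∈ F := by
  constructor
  · intro h
    exact ⟨hF.2.2.1 _ h _ inf_le_left, hF.2.2.1 _ h _ inf_le_right⟩
  · intro ⟨hx, hy⟩
    exact hF.2.2.2 x hx y hy

lemma gba_not_bot {𝓑 : Type*} [GeneralizedBooleanAlgebra 𝓑] {F : Set 𝓑}
    (hF : IsGBAFilter F) : (⊥ : 𝓑) ∉ F := by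
  intro h
  exact hF.2.1 (Set.eq_univ_of_forall fun z => hF.2.2.1 _ h z bot_le)

/-- For a generalized Boolean algebra B, the family {V_x : x ∈ B},
where V_x is the set of (prime) filters of B containing x, is itself a
generalized Boolean algebra of subsets of the filter space:
V_{x ∨ y} = V_x ∪ V_y, V_{x ∧ y} = V_x ∩ V_y, V_{x \ y} = V_x \ V_y;
moreover for arbitrary (not necessarily prime) filters one has the containments
V_x ∪ V_y ⊆ V_{x ∨ y} and V_{x ∧ y} = V_x ∩ V_y. -/
theorem stmt15 {𝓑 : Type*} [GeneralizedBooleanAlgebra 𝓑] (x y : 𝓑) :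
    ({F : {F : Set 𝓑 // IsPrimeGBAFilter F} | x ⊔ y ∈ F.1} =
      {F | x ∈ F.1} ∪ {F | y ∈ F.1}) ∧
    ({F : {F : Set 𝓑 // IsPrimeGBAFilter F} | x ⊓ y ∈ F.1} =
      {F | x ∈ F.1} ∩ {F | y ∈ F.1}) ∧
    ({F : {F : Set 𝓑 // IsPrimeGBAFilter F} | x \ y ∈ F.1} =
      {F | x ∈ F.1} \ {F | y ∈ F.1}) ∧
    ({F : {F : Set 𝓑 // IsGBAFilter F} | x ∈ F.1} ∪ {F | y ∈ F.1} ⊆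
      {F | x ⊔ y ∈ F.1}) ∧
    ({F : {F : Set 𝓑 // IsGBAFilter F} | x ⊓ y ∈ F.1} =
      {F | x ∈ F.1} ∩ {F | y ∈ F.1}) := by
  refine ⟨?_, ?_, ?_, ?_, ?_⟩
  · ext F
    constructor
    · intro h
      exact F.2.2 x y h
    · rintro (h | h)
      · exact gba_sup_mem F.2.1 h y
      · rw [sup_comm]; exact gba_sup_mem F.2.1 h x
  · ext F
    exact gba_inf_iff F.2.1 x y
  · ext F
    constructor
    · intro h
      refine ⟨F.2.1.2.2.1 _ h _ sdiff_le, fun hy => ?_⟩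
      have : x \ y ⊓ y ∈ F.1 := F.2.1.2.2.2 _ h _ hy
      rw [show x \ y ⊓ y = ⊥ by simp] at this
      exact gba_not_bot F.2.1 this
    · rintro ⟨hx, hy⟩
      have : y ⊔ x \ y ∈ F.1 := F.2.1.2.2.1 _ hx _ le_sup_sdiff
      rcases F.2.2 _ _ this with h | h
      · exact absurd h hy
      · exact h
  · rintro F (h | h)
    · exact gba_sup_mem F.2 h y
    · rw [sup_comm]; exact gba_sup_mem F.2 h x
  · ext F
    exact gba_inf_iff F.2 x y
end

section
/- In the Stone-dual labelled graph of a generalized Boolean dynamical system, the range operator satisfies r(V_x, a) = V_{θ_a(x)} for every x ∈ B and a ∈ L. -/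
/-- In the Stone-dual labelled graph of a generalized Boolean
dynamical system (vertices are filters; there is an a-labelled edge F → F' iff
θ_a(F) ⊆ F'), the range operator satisfies r(V_x, a) = V_{θ_a(x)} for every
x ∈ B and a ∈ L. -/
theorem stmt16 {𝓑 L : Type*} [GeneralizedBooleanAlgebra 𝓑]
    (θ : L → 𝓑 → 𝓑)
    (hbot : ∀ a, θ a ⊥ = ⊥)
    (hsup : ∀ a (u v : 𝓑), θ a (u ⊔ v) = θ a u ⊔ θ a v)
    (hinf : ∀ a (u v : 𝓑), θ a (u ⊓ v) = θ a u ⊓ θ a v)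
    (x : 𝓑) (a : L) :
    {F' : {F : Set 𝓑 // IsGBAFilter F} |
        ∃ F : {F : Set 𝓑 // IsGBAFilter F}, x ∈ F.1 ∧ ∀ z ∈ F.1, θ a z ∈ F'.1} =
      {F' : {F : Set 𝓑 // IsGBAFilter F} | θ a x ∈ F'.1} := by
  have hmono : ∀ (u v : 𝓑), u ≤ v → θ a u ≤ θ a v := by
    intro u v huv
    have : θ a (u ⊔ v) = θ a u ⊔ θ a v := hsup a u v
    rw [sup_eq_right.mpr huv] at this
    exact le_sup_left.trans this.ge
  ext F'
  simp only [Set.mem_setOf_eq]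
  constructor
  · rintro ⟨F, hxF, hθ⟩
    exact hθ x hxF
  · intro hx
    obtain ⟨hne, hproper, hup, hmeet⟩ := F'.2
    -- ⊥ ∉ F'
    have hbotnot : (⊥ : 𝓑) ∉ F'.1 := by
      intro hb
      apply hproper
      ext y
      simp only [Set.mem_univ, iff_true]
      exact hup ⊥ hb y bot_le
    refine ⟨⟨{z | θ a z ∈ F'.1}, ?_, ?_, ?_, ?_⟩, hx, fun z hz => hz⟩
    · exact ⟨x, hx⟩
    · intro h
      apply hbotnot
      have : (⊥ : 𝓑) ∈ {z | θ a z ∈ F'.1} := h ▸ Set.mem_univ _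
      simpa [hbot a] using this
    · intro u hu y huy
      exact hup _ hu _ (hmono u y huy)
    · intro u hu v hv
      show θ a (u ⊓ v) ∈ F'.1
      rw [hinf]
      exact hmeet _ hu _ hv
end

section
/- If I is a (two-sided) ideal of L_R(B, L, θ, I, J), then H_I = {A ∈ B : p_A ∈ I} is a hereditary J-saturated ideal of B: it is an ideal, closed under all θ_α, and whenever A ∈ J with θ_α(A) ∈ H_I for all α ∈ L, then A ∈ H_I. -/
/-!
Each condition on `H = {A | p_A ∈ I}` is witnessed by an algebraic identity that writes the
projection in question through projections already known to lie in `I`: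
`p_{A ∪ B} = p_A + p_B - p_A p_B`, `p_B = p_B p_A` for `B ⊆ A`,
`p_{θ_α(A)} = s*_{α,θ_α(A)} p_A s_{α,θ_α(A)}`, and, for `A ∈ J`, relation (5) with
`s_{α,θ_α(A)} s*_{α,θ_α(A)} = s_{α,θ_α(A)} p_{θ_α(A)} s*_{α,θ_α(A)}`.
-/

section

variable {A 𝓑 L : Type*} [Ring A]

theorem proj_sup_mem [Lattice 𝓑] {p : 𝓑 → A}
    (R1b : ∀ x y : 𝓑, p (x ⊓ y) = p x * p y)
    (R1c : ∀ x y : 𝓑, p (x ⊔ y) = p x + p y - p (x ⊓ y))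
    (I : TwoSidedIdeal A) {x y : 𝓑} (hx : p x ∈ I) (hy : p y ∈ I) : p (x ⊔ y) ∈ I := by
  rw [R1c, R1b]
  exact I.sub_mem (I.add_mem hx hy) (I.mul_mem_right _ _ hx)

theorem proj_mem_of_le [SemilatticeInf 𝓑] {p : 𝓑 → A}
    (R1b : ∀ x y : 𝓑, p (x ⊓ y) = p x * p y)
    (I : TwoSidedIdeal A) {x y : 𝓑} (hx : p x ∈ I) (hyx : y ≤ x) : p y ∈ I := by
  rw [← inf_eq_left.mpr hyx, R1b]
  exact I.mul_mem_left _ _ hx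

section PartialIsometries

variable [SemilatticeInf 𝓑] {θ : L → 𝓑 → 𝓑} {𝓘 : L → Set 𝓑}
  {p : 𝓑 → A} {s t : L → 𝓑 → A}

theorem proj_theta_eq_conj [DecidableEq L] (hθI : ∀ a (x : 𝓑), θ a x ∈ 𝓘 a)
    (R1b : ∀ x y : 𝓑, p (x ⊓ y) = p x * p y)
    (R2b : ∀ a, ∀ b ∈ 𝓘 a, ∀ x : 𝓑, t a b * p x = p (θ a x) * t a b)
    (R3 : ∀ a a', ∀ b ∈ 𝓘 a, ∀ b' ∈ 𝓘 a',
      t a b * s a' b' = if a = a' then p (b ⊓ b') else 0)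
    (a : L) (x : 𝓑) : p (θ a x) = t a (θ a x) * p x * s a (θ a x) := by
  have hb := hθI a x
  rw [R2b a _ hb, mul_assoc, R3 a a _ hb _ hb, if_pos rfl, ← R1b, inf_idem, inf_idem]

theorem s_mul_t_eq_s_mul_proj_mul_t (hθI : ∀ a (x : 𝓑), θ a x ∈ 𝓘 a)
    (R4a : ∀ a, ∀ b ∈ 𝓘 a, ∀ x : 𝓑, s a b * p x = s a (b ⊓ x))
    (a : L) (x : 𝓑) :
    s a (θ a x) * t a (θ a x) = s a (θ a x) * p (θ a x) * t a (θ a x) := by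
  rw [R4a a _ (hθI a x), inf_idem]

variable (I : TwoSidedIdeal A)

theorem proj_theta_mem [DecidableEq L] (hθI : ∀ a (x : 𝓑), θ a x ∈ 𝓘 a)
    (R1b : ∀ x y : 𝓑, p (x ⊓ y) = p x * p y)
    (R2b : ∀ a, ∀ b ∈ 𝓘 a, ∀ x : 𝓑, t a b * p x = p (θ a x) * t a b)
    (R3 : ∀ a a', ∀ b ∈ 𝓘 a, ∀ b' ∈ 𝓘 a',
      t a b * s a' b' = if a = a' then p (b ⊓ b') else 0)
    {x : 𝓑} (hx : p x ∈ I) (a : L) : p (θ a x) ∈ I := by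
  rw [proj_theta_eq_conj hθI R1b R2b R3]
  exact I.mul_mem_right _ _ (I.mul_mem_left _ _ hx)

theorem proj_mem_of_forall_theta_mem [OrderBot 𝓑] (hθI : ∀ a (x : 𝓑), θ a x ∈ 𝓘 a)
    (R4a : ∀ a, ∀ b ∈ 𝓘 a, ∀ x : 𝓑, s a b * p x = s a (b ⊓ x))
    {J : Set 𝓑} (hJfin : ∀ x ∈ J, {a : L | θ a x ≠ ⊥}.Finite)
    (R5 : ∀ x, ∀ hx : x ∈ J,
      p x = ∑ a ∈ (hJfin x hx).toFinset, s a (θ a x) * t a (θ a x))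
    {x : 𝓑} (hxJ : x ∈ J) (hθx : ∀ a, p (θ a x) ∈ I) : p x ∈ I := by
  rw [R5 x hxJ]
  refine sum_mem fun a _ => ?_
  rw [s_mul_t_eq_s_mul_proj_mul_t hθI R4a]
  exact I.mul_mem_right _ _ (I.mul_mem_left _ _ (hθx a))

end PartialIsometries

end

theorem stmt18_general {A 𝓑 L : Type*} [Ring A]
    [GeneralizedBooleanAlgebra 𝓑] [DecidableEq L]
    (θ : L → 𝓑 → 𝓑) (𝓘 : L → Set 𝓑) (J : Set 𝓑)
    (hθI : ∀ a (x : 𝓑), θ a x ∈ 𝓘 a)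
    (p : 𝓑 → A) (s t : L → 𝓑 → A)
    (R1b : ∀ x y : 𝓑, p (x ⊓ y) = p x * p y)
    (R1c : ∀ x y : 𝓑, p (x ⊔ y) = p x + p y - p (x ⊓ y))
    (R2b : ∀ a, ∀ b ∈ 𝓘 a, ∀ x : 𝓑, t a b * p x = p (θ a x) * t a b)
    (R3 : ∀ a a', ∀ b ∈ 𝓘 a, ∀ b' ∈ 𝓘 a',
      t a b * s a' b' = if a = a' then p (b ⊓ b') else 0)
    (R4a : ∀ a, ∀ b ∈ 𝓘 a, ∀ x : 𝓑, s a b * p x = s a (b ⊓ x))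
    (hJfin : ∀ x ∈ J, {a : L | θ a x ≠ ⊥}.Finite)
    (R5 : ∀ x, ∀ hx : x ∈ J,
      p x = ∑ a ∈ (hJfin x hx).toFinset, s a (θ a x) * t a (θ a x))
    -- T is a two-sided ideal of the algebra
    (T : Set A)
    (hT0 : (0 : A) ∈ T)
    (hTadd : ∀ x ∈ T, ∀ y ∈ T, x + y ∈ T)
    (hTmul : ∀ x ∈ T, ∀ y : A, x * y ∈ T ∧ y * x ∈ T) :
    (∀ x ∈ {A' : 𝓑 | p A' ∈ T}, ∀ y ∈ {A' : 𝓑 | p A' ∈ T},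
        x ⊔ y ∈ {A' : 𝓑 | p A' ∈ T}) ∧
    (∀ x ∈ {A' : 𝓑 | p A' ∈ T}, ∀ y : 𝓑, y ≤ x → y ∈ {A' : 𝓑 | p A' ∈ T}) ∧
    (∀ x ∈ {A' : 𝓑 | p A' ∈ T}, ∀ a : L, θ a x ∈ {A' : 𝓑 | p A' ∈ T}) ∧
    (∀ x ∈ J, (∀ a : L, θ a x ∈ {A' : 𝓑 | p A' ∈ T}) → x ∈ {A' : 𝓑 | p A' ∈ T}) := by
  let I : TwoSidedIdeal A := .mk' T hT0 (hTadd _ · _ ·)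
    (fun hx => by simpa using (hTmul _ hx (-1)).1)
    (fun hy => (hTmul _ hy _).2) (fun hx => (hTmul _ hx _).1)
  have hI : ∀ x, x ∈ T ↔ x ∈ I := fun x => (TwoSidedIdeal.mem_mk' ..).symm
  simp only [Set.mem_ofPred_eq, hI]
  exact ⟨fun _ hx _ hy => proj_sup_mem R1b R1c I hx hy,
    fun _ hx _ hyx => proj_mem_of_le R1b I hx hyx,
    fun _ hx => proj_theta_mem I hθI R1b R2b R3 hx,
    fun _ hxJ => proj_mem_of_forall_theta_mem I hθI R4a hJfin R5 hxJ⟩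

/-- If T is a two-sided ideal of L_R(B,L,θ,I,J) (formalized as any
R-algebra with generators p, s, s* satisfying relations (1)–(5)), then
H_T = {A ∈ B : p_A ∈ T} is a hereditary J-saturated ideal of B: it is an ideal
of B, closed under all θ_α, and whenever A ∈ J with θ_α(A) ∈ H_T for all α ∈ L,
then A ∈ H_T. -/
theorem stmt18 {R A 𝓑 L : Type*} [CommRing R] [Ring A] [Algebra R A]
    [GeneralizedBooleanAlgebra 𝓑] [DecidableEq L]
    (θ : L → 𝓑 → 𝓑) (𝓘 : L → Set 𝓑) (J : Set 𝓑)
    (hθbot : ∀ a, θ a ⊥ = ⊥)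
    (hθinf : ∀ a (x y : 𝓑), θ a (x ⊓ y) = θ a x ⊓ θ a y)
    (hθI : ∀ a (x : 𝓑), θ a x ∈ 𝓘 a)
    (p : 𝓑 → A) (s t : L → 𝓑 → A)
    (R1a : p ⊥ = 0)
    (R1b : ∀ x y : 𝓑, p (x ⊓ y) = p x * p y)
    (R1c : ∀ x y : 𝓑, p (x ⊔ y) = p x + p y - p (x ⊓ y))
    (R2a : ∀ a, ∀ b ∈ 𝓘 a, ∀ x : 𝓑, p x * s a b = s a b * p (θ a x))
    (R2b : ∀ a, ∀ b ∈ 𝓘 a, ∀ x : 𝓑, t a b * p x = p (θ a x) * t a b)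
    (R3 : ∀ a a', ∀ b ∈ 𝓘 a, ∀ b' ∈ 𝓘 a',
      t a b * s a' b' = if a = a' then p (b ⊓ b') else 0)
    (R4a : ∀ a, ∀ b ∈ 𝓘 a, ∀ x : 𝓑, s a b * p x = s a (b ⊓ x))
    (R4b : ∀ a, ∀ b ∈ 𝓘 a, ∀ x : 𝓑, p x * t a b = t a (b ⊓ x))
    (hJfin : ∀ x ∈ J, {a : L | θ a x ≠ ⊥}.Finite)
    (R5 : ∀ x, ∀ hx : x ∈ J,
      p x = ∑ a ∈ (hJfin x hx).toFinset, s a (θ a x) * t a (θ a x))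
    -- T is a two-sided ideal of the algebra
    (T : Set A)
    (hT0 : (0 : A) ∈ T)
    (hTadd : ∀ x ∈ T, ∀ y ∈ T, x + y ∈ T)
    (hTmul : ∀ x ∈ T, ∀ y : A, x * y ∈ T ∧ y * x ∈ T) :
    (∀ x ∈ {A' : 𝓑 | p A' ∈ T}, ∀ y ∈ {A' : 𝓑 | p A' ∈ T},
        x ⊔ y ∈ {A' : 𝓑 | p A' ∈ T}) ∧
    (∀ x ∈ {A' : 𝓑 | p A' ∈ T}, ∀ y : 𝓑, y ≤ x → y ∈ {A' : 𝓑 | p A' ∈ T}) ∧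
    (∀ x ∈ {A' : 𝓑 | p A' ∈ T}, ∀ a : L, θ a x ∈ {A' : 𝓑 | p A' ∈ T}) ∧
    (∀ x ∈ J, (∀ a : L, θ a x ∈ {A' : 𝓑 | p A' ∈ T}) → x ∈ {A' : 𝓑 | p A' ∈ T}) :=
  stmt18_general θ 𝓘 J hθI p s t R1b R1c R2b R3 R4a hJfin R5 T hT0 hTadd hTmul
end
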